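/- arXiv:2204.10982 — 8 statements merged into one kernel-verified Lean document; each statement's English description precedes it below -/
import Mathlib

section
/- Let δ be a non-negative function of joint distributions of finite random variables (S,Y,Z) satisfying δ(S;Y\Z) ≤ min{I(S;Y), I(S;Y|Z)} (and symmetrically δ(S;Z\Y) ≤ min{I(S;Z), I(S;Z|Y)}). Define UI_δ(S;Y\Z) = max{δ(S;Y\Z), δ(S;Z\Y) + I(S;Y) − I(S;Z)}, UI_δ(S;Z\Y) = max{δ(S;Z\Y), δ(S;Y\Z) + I(S;Z) − I(S;Y)}, SI_δ(S;Y,Z) = min{I(S;Y) − δ(S;Y\Z), I(S;Z) − δ(S;Z\Y)}, CI_δ(S;Y,Z) = min{I(S;Y|Z) − δ(S;Y\Z), I(S;Z|Y) − δ(S;Z\Y)}. Then these four functions are non-negative and satisfy the bivariate information decomposition equations: I(S;YZ) = SI_δ + CI_δ + UI_δ(S;Y\Z) + UI_δ(S;Z\Y), I(S;Y) = SI_δ + UI_δ(S;Y\Z), and I(S;Z) = SI_δ + UI_δ(S;Z\Y). -/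
open scoped BigOperators

/-- A probability distribution on a finite type. -/
def IsProbDist {A : Type} [Fintype A] (p : A → ℝ) : Prop :=
  (∀ x, 0 ≤ p x) ∧ ∑ x, p x = 1

/-- Shannon mutual information `I(A;B)` of a joint distribution on `A × B`. -/
noncomputable def mi2 {A B : Type} [Fintype A] [Fintype B] (p : A × B → ℝ) : ℝ :=
  ∑ a, ∑ b, p (a, b) * Real.log (p (a, b) / ((∑ b', p (a, b')) * (∑ a', p (a', b))))

/-- Conditional mutual information `I(A;B|C)` of a joint distribution on `A × B × C`. -/
noncomputable def cmi3 {A B C : Type} [Fintype A] [Fintype B] [Fintype C]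
    (p : A × B × C → ℝ) : ℝ :=
  ∑ a, ∑ b, ∑ c, p (a, b, c) *
    Real.log ((p (a, b, c) * (∑ a', ∑ b', p (a', b', c))) /
      ((∑ b', p (a, b', c)) * (∑ a', p (a', b, c))))

/-- Marginal distribution of `(S,Y)`. -/
noncomputable def margSY {S Y Z : Type} [Fintype S] [Fintype Y] [Fintype Z]
    (p : S × Y × Z → ℝ) : S × Y → ℝ := fun x => ∑ z, p (x.1, x.2, z)

/-- Marginal distribution of `(S,Z)`. -/
noncomputable def margSZ {S Y Z : Type} [Fintype S] [Fintype Y] [Fintype Z]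
    (p : S × Y × Z → ℝ) : S × Z → ℝ := fun x => ∑ y, p (x.1, y, x.2)

/-- `I(S;Y)`. -/
noncomputable def ISY {S Y Z : Type} [Fintype S] [Fintype Y] [Fintype Z]
    (p : S × Y × Z → ℝ) : ℝ := mi2 (margSY p)

/-- `I(S;Z)`. -/
noncomputable def ISZ {S Y Z : Type} [Fintype S] [Fintype Y] [Fintype Z]
    (p : S × Y × Z → ℝ) : ℝ := mi2 (margSZ p)

/-- `I(S;YZ)`, the mutual information of `S` with the pair `(Y,Z)`. -/
noncomputable def ISYZ {S Y Z : Type} [Fintype S] [Fintype Y] [Fintype Z]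
    (p : S × Y × Z → ℝ) : ℝ := mi2 p

/-- `I(S;Y|Z)`. -/
noncomputable def ISYgZ {S Y Z : Type} [Fintype S] [Fintype Y] [Fintype Z]
    (p : S × Y × Z → ℝ) : ℝ := cmi3 p

/-- The same joint distribution, with the roles of `Y` and `Z` exchanged. -/
def swapYZ {S Y Z : Type} (p : S × Y × Z → ℝ) : S × Z × Y → ℝ :=
  fun x => p (x.1, x.2.2, x.2.1)

/-- `I(S;Z|Y)`. -/
noncomputable def ISZgY {S Y Z : Type} [Fintype S] [Fintype Y] [Fintype Z]
    (p : S × Y × Z → ℝ) : ℝ := ISYgZ (swapYZ p)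

/-- The joint distribution of two independent triples, grouped componentwise. -/
def prodDist {S1 Y1 Z1 S2 Y2 Z2 : Type}
    (p1 : S1 × Y1 × Z1 → ℝ) (p2 : S2 × Y2 × Z2 → ℝ) :
    (S1 × S2) × (Y1 × Y2) × (Z1 × Z2) → ℝ :=
  fun x => p1 (x.1.1, x.2.1.1, x.2.2.1) * p2 (x.1.2, x.2.1.2, x.2.2.2)

/-- `UI_δ(S;Y\Z)` of the UI construction. -/
noncomputable def UIdY (δ : ∀ (S Y Z : Type) [Fintype S] [Fintype Y] [Fintype Z],
      (S × Y × Z → ℝ) → ℝ)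
    {S Y Z : Type} [Fintype S] [Fintype Y] [Fintype Z] (p : S × Y × Z → ℝ) : ℝ :=
  max (δ S Y Z p) (δ S Z Y (swapYZ p) + ISY p - ISZ p)

/-- `UI_δ(S;Z\Y)` of the UI construction. -/
noncomputable def UIdZ (δ : ∀ (S Y Z : Type) [Fintype S] [Fintype Y] [Fintype Z],
      (S × Y × Z → ℝ) → ℝ)
    {S Y Z : Type} [Fintype S] [Fintype Y] [Fintype Z] (p : S × Y × Z → ℝ) : ℝ :=
  max (δ S Z Y (swapYZ p)) (δ S Y Z p + ISZ p - ISY p)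

/-- `SI_δ(S;Y,Z)` of the UI construction. -/
noncomputable def SId (δ : ∀ (S Y Z : Type) [Fintype S] [Fintype Y] [Fintype Z],
      (S × Y × Z → ℝ) → ℝ)
    {S Y Z : Type} [Fintype S] [Fintype Y] [Fintype Z] (p : S × Y × Z → ℝ) : ℝ :=
  min (ISY p - δ S Y Z p) (ISZ p - δ S Z Y (swapYZ p))

/-- `CI_δ(S;Y,Z)` of the UI construction. -/
noncomputable def CId (δ : ∀ (S Y Z : Type) [Fintype S] [Fintype Y] [Fintype Z],
      (S × Y × Z → ℝ) → ℝ)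
    {S Y Z : Type} [Fintype S] [Fintype Y] [Fintype Z] (p : S × Y × Z → ℝ) : ℝ :=
  min (ISYgZ p - δ S Y Z p) (ISZgY p - δ S Z Y (swapYZ p))

lemma chain_rule {S Y Z : Type} [Fintype S] [Fintype Y] [Fintype Z]
    (p : S × Y × Z → ℝ) (h0 : ∀ x, 0 ≤ p x) :
    cmi3 p = mi2 p - mi2 (margSZ p) := by
  rw [eq_sub_iff_add_eq]
  unfold cmi3 mi2
  simp only [margSZ, Fintype.sum_prod_type]
  rw [← Finset.sum_add_distrib]
  refine Finset.sum_congr rfl fun a _ => ?_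
  have h2 : ∀ (f : Z → ℝ), (∑ x : Z, (∑ y, p (a, y, x)) * f x)
      = ∑ b : Y, ∑ c : Z, p (a, b, c) * f c := by
    intro f
    calc ∑ c, (∑ y, p (a, y, c)) * f c
        = ∑ c, ∑ y, p (a, y, c) * f c :=
          Finset.sum_congr rfl fun c _ => Finset.sum_mul _ _ _
      _ = ∑ b : Y, ∑ c : Z, p (a, b, c) * f c := Finset.sum_comm
  rw [h2]
  rw [← Finset.sum_add_distrib]
  refine Finset.sum_congr rfl fun b _ => ?_
  rw [← Finset.sum_add_distrib]
  refine Finset.sum_congr rfl fun c _ => ?_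
  rcases eq_or_lt_of_le (h0 (a, b, c)) with h | h
  · simp [← h]
  · have hPSZ : 0 < ∑ b', p (a, b', c) :=
      h.trans_le (Finset.single_le_sum (fun i _ => h0 (a, i, c)) (Finset.mem_univ b))
    have hPYZ : 0 < ∑ a', p (a', b, c) :=
      h.trans_le (Finset.single_le_sum (fun i _ => h0 (i, b, c)) (Finset.mem_univ a))
    have hPZ : 0 < ∑ a', ∑ b', p (a', b', c) :=
      hPSZ.trans_le (Finset.single_le_sum
        (fun i _ => Finset.sum_nonneg fun j _ => h0 (i, j, c)) (Finset.mem_univ a))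
    have hPS' : 0 < ∑ x : Z, ∑ y : Y, p (a, y, x) :=
      hPSZ.trans_le (Finset.single_le_sum
        (fun i _ => Finset.sum_nonneg fun j _ => h0 (a, j, i)) (Finset.mem_univ c))
    have hcomm : (∑ x : Y, ∑ y : Z, p (a, x, y)) = ∑ x : Z, ∑ y : Y, p (a, y, x) :=
      Finset.sum_comm
    have hPS : 0 < ∑ x : Y, ∑ y : Z, p (a, x, y) := hcomm ▸ hPS'
    rw [Real.log_div (mul_pos h hPZ).ne' (mul_pos hPSZ hPYZ).ne',
      Real.log_div hPSZ.ne' (mul_pos hPS' hPZ).ne',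
      Real.log_div h.ne' (mul_pos hPS hPYZ).ne',
      Real.log_mul h.ne' hPZ.ne', Real.log_mul hPSZ.ne' hPYZ.ne',
      Real.log_mul hPS'.ne' hPZ.ne', Real.log_mul hPS.ne' hPYZ.ne', hcomm]
    ring

lemma margSZ_swap' {S Y Z : Type} [Fintype S] [Fintype Y] [Fintype Z]
    (p : S × Y × Z → ℝ) : margSZ (swapYZ p) = margSY p := rfl

lemma margSY_swap' {S Y Z : Type} [Fintype S] [Fintype Y] [Fintype Z]
    (p : S × Y × Z → ℝ) : margSY (swapYZ p) = margSZ p := rfl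

lemma mi2_swap' {S Y Z : Type} [Fintype S] [Fintype Y] [Fintype Z]
    (p : S × Y × Z → ℝ) : mi2 (swapYZ p) = mi2 p := by
  unfold mi2
  simp only [swapYZ, Fintype.sum_prod_type]
  refine Finset.sum_congr rfl fun a _ => ?_
  rw [Finset.sum_comm]
  refine Finset.sum_congr rfl fun y _ => Finset.sum_congr rfl fun z _ => ?_
  rw [show (∑ x : Z, ∑ y' : Y, p (a, y', x)) = ∑ x : Y, ∑ y' : Z, p (a, x, y') from
    Finset.sum_comm]

lemma sum_swap_eq' {S Y Z : Type} [Fintype S] [Fintype Y] [Fintype Z]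
    (p : S × Y × Z → ℝ) : ∑ x, swapYZ p x = ∑ x, p x := by
  simp only [swapYZ, Fintype.sum_prod_type]
  exact Finset.sum_congr rfl fun s _ => Finset.sum_comm

/-- The UI construction: if `δ` is non-negative and bounded by
`min {I(S;Y), I(S;Y|Z)}`, then `UI_δ`, `SI_δ`, `CI_δ` form a non-negative
bivariate information decomposition. -/
theorem UI_construction
    (δ : ∀ (S Y Z : Type) [Fintype S] [Fintype Y] [Fintype Z], (S × Y × Z → ℝ) → ℝ)
    (hδ0 : ∀ (S Y Z : Type) [Fintype S] [Fintype Y] [Fintype Z] (q : S × Y × Z → ℝ),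
      IsProbDist q → 0 ≤ δ S Y Z q)
    (hδle : ∀ (S Y Z : Type) [Fintype S] [Fintype Y] [Fintype Z] (q : S × Y × Z → ℝ),
      IsProbDist q → δ S Y Z q ≤ min (ISY q) (ISYgZ q))
    {S Y Z : Type} [Fintype S] [Fintype Y] [Fintype Z]
    (p : S × Y × Z → ℝ) (hp : IsProbDist p) :
    0 ≤ UIdY δ p ∧ 0 ≤ UIdZ δ p ∧ 0 ≤ SId δ p ∧ 0 ≤ CId δ p ∧
    ISYZ p = SId δ p + CId δ p + UIdY δ p + UIdZ δ p ∧
    ISY p = SId δ p + UIdY δ p ∧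
    ISZ p = SId δ p + UIdZ δ p := by
  obtain ⟨h0, h1⟩ := hp
  have hswap : IsProbDist (swapYZ p) := ⟨fun x => h0 _, by rw [sum_swap_eq']; exact h1⟩
  have haM := hδle S Y Z p ⟨h0, h1⟩
  have hbM := hδle S Z Y (swapYZ p) hswap
  have ha0 := hδ0 S Y Z p ⟨h0, h1⟩
  have hb0 := hδ0 S Z Y (swapYZ p) hswap
  have haY : δ S Y Z p ≤ ISY p := haM.trans (min_le_left _ _)
  have haC : δ S Y Z p ≤ ISYgZ p := haM.trans (min_le_right _ _)
  have hbZ : δ S Z Y (swapYZ p) ≤ ISZ p := by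
    have h := hbM.trans (min_le_left _ _)
    rwa [show ISY (swapYZ p) = ISZ p from by unfold ISY ISZ; rw [margSY_swap']] at h
  have hbC : δ S Z Y (swapYZ p) ≤ ISZgY p := hbM.trans (min_le_right _ _)
  have hc1 : ISYgZ p = ISYZ p - ISZ p := chain_rule p h0
  have hc2 : ISZgY p = ISYZ p - ISY p := by
    have h := chain_rule (swapYZ p) (fun x => h0 _)
    rwa [mi2_swap', margSZ_swap'] at h
  simp only [UIdY, UIdZ, SId, CId]
  set dY := δ S Y Z p
  set dZ := δ S Z Y (swapYZ p)
  refine ⟨le_max_of_le_left ha0, le_max_of_le_left hb0,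
    le_min (by linarith) (by linarith), le_min (by linarith) (by linarith), ?_, ?_, ?_⟩
  · rw [hc1, hc2]
    simp only [min_def, max_def]
    split_ifs <;> linarith
  · simp only [min_def, max_def]
    split_ifs <;> linarith
  · simp only [min_def, max_def]
    split_ifs <;> linarith
end

section
/- Specific information is additive under independence: if (S1,Y1) is independent of (S2,Y2), then for all outcomes s1, s2 with positive probability, I(S1S2 = (s1,s2); Y1Y2) = I(S1 = s1; Y1) + I(S2 = s2; Y2), where I(S = s; Y) := Σ_y P(y|s) log(P(s|y)/P(s)). -/
open scoped BigOperators

/-- The joint distribution of two independent pairs, grouped componentwise. -/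
def prodDist2 {S1 Y1 S2 Y2 : Type}
    (p1 : S1 × Y1 → ℝ) (p2 : S2 × Y2 → ℝ) : (S1 × S2) × (Y1 × Y2) → ℝ :=
  fun x => p1 (x.1.1, x.2.1) * p2 (x.1.2, x.2.2)

/-- The specific information `I(S = s; Y) = ∑_y P(y|s) log (P(s|y)/P(s))`. -/
noncomputable def specInfo {S Y : Type} [Fintype S] [Fintype Y]
    (p : S × Y → ℝ) (s : S) : ℝ :=
  ∑ y, (p (s, y) / (∑ y', p (s, y'))) *
    Real.log ((p (s, y) / (∑ s', p (s', y))) / (∑ y', p (s, y')))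

/-!
Under independence the conditional law `P(y₁y₂ | s₁s₂)` and the ratio `P(s₁s₂ | y₁y₂) / P(s₁s₂)`
both factor into their two components. The logarithm of the ratio therefore splits into a sum,
and when it is averaged against the product weights each summand integrates out the other
component's conditional law, which has total mass one.
-/

open Finset Real

theorem sum_mul_mul_log_mul_of_sum_eq_one {ι κ : Type*} [Fintype ι] [Fintype κ]
    (q₁ r₁ : ι → ℝ) (q₂ r₂ : κ → ℝ) (hq₁ : ∑ i, q₁ i = 1) (hq₂ : ∑ j, q₂ j = 1)
    (hr₁ : ∀ i, q₁ i ≠ 0 → r₁ i ≠ 0) (hr₂ : ∀ j, q₂ j ≠ 0 → r₂ j ≠ 0) :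
    ∑ x : ι × κ, q₁ x.1 * q₂ x.2 * log (r₁ x.1 * r₂ x.2) =
      ∑ i, q₁ i * log (r₁ i) + ∑ j, q₂ j * log (r₂ j) := by
  have hsplit : ∀ i j, q₁ i * q₂ j * log (r₁ i * r₂ j) =
      q₂ j * (q₁ i * log (r₁ i)) + q₁ i * (q₂ j * log (r₂ j)) := by
    intro i j
    by_cases h₁ : q₁ i = 0
    · simp [h₁]
    by_cases h₂ : q₂ j = 0
    · simp [h₂]
    rw [log_mul (hr₁ i h₁) (hr₂ j h₂)]
    ring
  simp only [Fintype.sum_prod_type, hsplit, sum_add_distrib, ← sum_mul, ← mul_sum, hq₂, one_mul]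
  rw [hq₁, one_mul]

section SpecInfo

variable {S Y : Type} [Fintype Y]

noncomputable def condProb (p : S × Y → ℝ) (s : S) (y : Y) : ℝ :=
  p (s, y) / ∑ y', p (s, y')

/-- The ratio `P(s | y) / P(s)`, whose logarithm is the pointwise mutual information. -/
noncomputable def pmiRatio [Fintype S] (p : S × Y → ℝ) (s : S) (y : Y) : ℝ :=
  (p (s, y) / ∑ s', p (s', y)) / ∑ y', p (s, y')

theorem specInfo_eq_sum_condProb_mul_log [Fintype S] (p : S × Y → ℝ) (s : S) :
    specInfo p s = ∑ y, condProb p s y * log (pmiRatio p s y) :=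
  rfl

theorem sum_condProb {p : S × Y → ℝ} {s : S} (hs : ∑ y, p (s, y) ≠ 0) :
    ∑ y, condProb p s y = 1 := by
  unfold condProb
  rw [← sum_div, div_self hs]

-- Nonnegativity is what rules out `P(y) = 0 < P(s, y)`, where `Real.log` would take its junk value.
theorem pmiRatio_ne_zero [Fintype S] {p : S × Y → ℝ} (hp : ∀ x, 0 ≤ p x) {s : S} {y : Y}
    (h : condProb p s y ≠ 0) : pmiRatio p s y ≠ 0 := by
  obtain ⟨hsy, hs⟩ := div_ne_zero_iff.mp h
  have hy : 0 < ∑ s', p (s', y) :=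
    (lt_of_le_of_ne (hp _) (Ne.symm hsy)).trans_le
      (single_le_sum (fun s' _ => hp (s', y)) (mem_univ s))
  exact div_ne_zero (div_ne_zero hsy hy.ne') hs

end SpecInfo

section ProdDist

variable {S₁ Y₁ S₂ Y₂ : Type} (p₁ : S₁ × Y₁ → ℝ) (p₂ : S₂ × Y₂ → ℝ)

theorem sum_prodDist2_fix_fst [Fintype Y₁] [Fintype Y₂] (s : S₁ × S₂) :
    ∑ y, prodDist2 p₁ p₂ (s, y) = (∑ y, p₁ (s.1, y)) * ∑ y, p₂ (s.2, y) := by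
  rw [Fintype.sum_prod_type, Fintype.sum_mul_sum]
  rfl

theorem sum_prodDist2_fix_snd [Fintype S₁] [Fintype S₂] (y : Y₁ × Y₂) :
    ∑ s, prodDist2 p₁ p₂ (s, y) = (∑ s, p₁ (s, y.1)) * ∑ s, p₂ (s, y.2) := by
  rw [Fintype.sum_prod_type, Fintype.sum_mul_sum]
  rfl

theorem condProb_prodDist2 [Fintype Y₁] [Fintype Y₂] (s : S₁ × S₂) (y : Y₁ × Y₂) :
    condProb (prodDist2 p₁ p₂) s y = condProb p₁ s.1 y.1 * condProb p₂ s.2 y.2 := by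
  rw [condProb, sum_prodDist2_fix_fst]
  exact mul_div_mul_comm _ _ _ _

theorem pmiRatio_prodDist2 [Fintype S₁] [Fintype Y₁] [Fintype S₂] [Fintype Y₂]
    (s : S₁ × S₂) (y : Y₁ × Y₂) :
    pmiRatio (prodDist2 p₁ p₂) s y = pmiRatio p₁ s.1 y.1 * pmiRatio p₂ s.2 y.2 := by
  rw [pmiRatio, sum_prodDist2_fix_fst, sum_prodDist2_fix_snd, prodDist2,
    mul_div_mul_comm, mul_div_mul_comm]
  rfl

end ProdDist

/-- Specific information is additive under independence: for outcomes of positive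
probability, `I(S1S2 = (s1,s2); Y1Y2) = I(S1 = s1; Y1) + I(S2 = s2; Y2)`. -/
theorem specInfo_additive {S1 Y1 S2 Y2 : Type}
    [Fintype S1] [Fintype Y1] [Fintype S2] [Fintype Y2]
    (p1 : S1 × Y1 → ℝ) (p2 : S2 × Y2 → ℝ)
    (hp1 : IsProbDist p1) (hp2 : IsProbDist p2)
    (s1 : S1) (s2 : S2)
    (hs1 : 0 < ∑ y, p1 (s1, y)) (hs2 : 0 < ∑ y, p2 (s2, y)) :
    specInfo (prodDist2 p1 p2) (s1, s2) = specInfo p1 s1 + specInfo p2 s2 := by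
  simp only [specInfo_eq_sum_condProb_mul_log, condProb_prodDist2, pmiRatio_prodDist2]
  exact sum_mul_mul_log_mul_of_sum_eq_one _ _ _ _ (sum_condProb hs1.ne') (sum_condProb hs2.ne')
    (fun _ => pmiRatio_ne_zero hp1.1) (fun _ => pmiRatio_ne_zero hp2.1)
end

section
/- SI_min, defined by SI_min(S;Y,Z) = Σ_s P(s) min{I(S=s;Y), I(S=s;Z)}, is superadditive: if (S1,Y1,Z1) is independent of (S2,Y2,Z2), then SI_min(S1S2; Y1Y2, Z1Z2) ≥ SI_min(S1;Y1,Z1) + SI_min(S2;Y2,Z2). -/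
open scoped BigOperators

/-- `SI_min(S;Y,Z) = ∑_s P(s) min {I(S=s;Y), I(S=s;Z)}`. -/
noncomputable def SImin {S Y Z : Type} [Fintype S] [Fintype Y] [Fintype Z]
    (p : S × Y × Z → ℝ) : ℝ :=
  ∑ s, (∑ y, ∑ z, p (s, y, z)) *
    min (specInfo (margSY p) s) (specInfo (margSZ p) s)


/-!
For `P(s₁) P(s₂) > 0` the specific information of the combined system splits as
`I(S₁S₂ = (s₁,s₂); Y₁Y₂) = I(S₁ = s₁; Y₁) + I(S₂ = s₂; Y₂)`, and likewise for `Z₁Z₂`, because every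
probability entering the summand factorises. Since `min (a + b) (c + d) ≥ min a c + min b d`, each
term of `SI_min(S₁S₂; Y₁Y₂, Z₁Z₂)` dominates `P(s₁) P(s₂)` times the sum of the two separate terms,
and summing over `(s₁, s₂)` with marginals of total mass one gives the claim.
-/

open Finset

section specInfo

variable {S₁ Y₁ S₂ Y₂ : Type}

def jointProd (q₁ : S₁ × Y₁ → ℝ) (q₂ : S₂ × Y₂ → ℝ) : (S₁ × S₂) × (Y₁ × Y₂) → ℝ :=
  fun x => q₁ (x.1.1, x.2.1) * q₂ (x.1.2, x.2.2)

theorem sum_jointProd_snd [Fintype Y₁] [Fintype Y₂] (q₁ : S₁ × Y₁ → ℝ) (q₂ : S₂ × Y₂ → ℝ)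
    (s₁ : S₁) (s₂ : S₂) :
    ∑ y, jointProd q₁ q₂ ((s₁, s₂), y) = (∑ y, q₁ (s₁, y)) * ∑ y, q₂ (s₂, y) := by
  rw [Fintype.sum_prod_type, sum_mul_sum]
  rfl

theorem sum_jointProd_fst [Fintype S₁] [Fintype S₂] (q₁ : S₁ × Y₁ → ℝ) (q₂ : S₂ × Y₂ → ℝ)
    (y₁ : Y₁) (y₂ : Y₂) :
    ∑ s, jointProd q₁ q₂ (s, (y₁, y₂)) = (∑ s, q₁ (s, y₁)) * ∑ s, q₂ (s, y₂) := by
  rw [Fintype.sum_prod_type, sum_mul_sum]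
  rfl

/-- With `a = P(s, y)`, `C = P(y)` and `P = P(s)`, the summand of `specInfo` is
`a / P * log (a / C / P)`. -/
theorem mul_div_mul_mul_log_eq {a b P₁ P₂ C₁ C₂ : ℝ} (ha : 0 ≤ a) (hb : 0 ≤ b)
    (hP₁ : 0 < P₁) (hP₂ : 0 < P₂) (haC : a ≤ C₁) (hbC : b ≤ C₂) :
    a * b / (P₁ * P₂) * Real.log (a * b / (C₁ * C₂) / (P₁ * P₂))
      = b / P₂ * (a / P₁ * Real.log (a / C₁ / P₁))
        + a / P₁ * (b / P₂ * Real.log (b / C₂ / P₂)) := by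
  obtain rfl | ha := ha.eq_or_lt
  · simp
  obtain rfl | hb := hb.eq_or_lt
  · simp
  have hC₁ : 0 < C₁ := ha.trans_le haC
  have hC₂ : 0 < C₂ := hb.trans_le hbC
  have hsplit : a * b / (C₁ * C₂) / (P₁ * P₂) = (a / C₁ / P₁) * (b / C₂ / P₂) := by
    field_simp
  rw [hsplit, Real.log_mul (by positivity) (by positivity)]
  ring

theorem sum_div_sum_self [Fintype Y₁] {q : S₁ × Y₁ → ℝ} {s : S₁} (hs : 0 < ∑ y, q (s, y)) :
    ∑ y, q (s, y) / ∑ y', q (s, y') = 1 := by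
  rw [← sum_div, div_self hs.ne']

theorem specInfo_jointProd [Fintype S₁] [Fintype Y₁] [Fintype S₂] [Fintype Y₂]
    {q₁ : S₁ × Y₁ → ℝ} {q₂ : S₂ × Y₂ → ℝ}
    (hq₁ : ∀ x, 0 ≤ q₁ x) (hq₂ : ∀ x, 0 ≤ q₂ x) {s₁ : S₁} {s₂ : S₂}
    (hs₁ : 0 < ∑ y, q₁ (s₁, y)) (hs₂ : 0 < ∑ y, q₂ (s₂, y)) :
    specInfo (jointProd q₁ q₂) (s₁, s₂) = specInfo q₁ s₁ + specInfo q₂ s₂ := by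
  have hle₁ (y : Y₁) : q₁ (s₁, y) ≤ ∑ s, q₁ (s, y) :=
    single_le_sum (fun s _ => hq₁ (s, y)) (mem_univ s₁)
  have hle₂ (y : Y₂) : q₂ (s₂, y) ≤ ∑ s, q₂ (s, y) :=
    single_le_sum (fun s _ => hq₂ (s, y)) (mem_univ s₂)
  simp only [specInfo, sum_jointProd_snd, sum_jointProd_fst]
  simp only [Fintype.sum_prod_type]
  simp only [jointProd, mul_div_mul_mul_log_eq (hq₁ _) (hq₂ _) hs₁ hs₂ (hle₁ _) (hle₂ _),
    sum_add_distrib, ← sum_mul, ← mul_sum, sum_div_sum_self hs₁, sum_div_sum_self hs₂, one_mul]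

end specInfo

section prodDist

variable {S₁ Y₁ Z₁ S₂ Y₂ Z₂ : Type} [Fintype S₁] [Fintype Y₁] [Fintype Z₁]
  [Fintype S₂] [Fintype Y₂] [Fintype Z₂]

theorem margSY_prodDist (p₁ : S₁ × Y₁ × Z₁ → ℝ) (p₂ : S₂ × Y₂ × Z₂ → ℝ) :
    margSY (prodDist p₁ p₂) = jointProd (margSY p₁) (margSY p₂) := by
  funext x
  simp only [margSY, prodDist, jointProd, Fintype.sum_prod_type, sum_mul_sum]

theorem margSZ_prodDist (p₁ : S₁ × Y₁ × Z₁ → ℝ) (p₂ : S₂ × Y₂ × Z₂ → ℝ) :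
    margSZ (prodDist p₁ p₂) = jointProd (margSZ p₁) (margSZ p₂) := by
  funext x
  simp only [margSZ, prodDist, jointProd, Fintype.sum_prod_type, sum_mul_sum]

theorem sum_margSY (p : S₁ × Y₁ × Z₁ → ℝ) (s : S₁) :
    ∑ y, margSY p (s, y) = ∑ y, ∑ z, p (s, y, z) :=
  rfl

theorem sum_margSZ (p : S₁ × Y₁ × Z₁ → ℝ) (s : S₁) :
    ∑ z, margSZ p (s, z) = ∑ y, ∑ z, p (s, y, z) :=
  sum_comm

theorem sum_sum_prodDist (p₁ : S₁ × Y₁ × Z₁ → ℝ) (p₂ : S₂ × Y₂ × Z₂ → ℝ) (s₁ : S₁) (s₂ : S₂) :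
    ∑ y, ∑ z, prodDist p₁ p₂ ((s₁, s₂), y, z)
      = (∑ y, ∑ z, p₁ (s₁, y, z)) * ∑ y, ∑ z, p₂ (s₂, y, z) := by
  rw [← sum_margSY, ← sum_margSY, ← sum_margSY, margSY_prodDist, sum_jointProd_snd]

theorem min_specInfo_add_le_prodDist {p₁ : S₁ × Y₁ × Z₁ → ℝ} {p₂ : S₂ × Y₂ × Z₂ → ℝ}
    (hp₁ : ∀ x, 0 ≤ p₁ x) (hp₂ : ∀ x, 0 ≤ p₂ x) {s₁ : S₁} {s₂ : S₂}
    (hs₁ : 0 < ∑ y, ∑ z, p₁ (s₁, y, z)) (hs₂ : 0 < ∑ y, ∑ z, p₂ (s₂, y, z)) :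
    min (specInfo (margSY p₁) s₁) (specInfo (margSZ p₁) s₁)
        + min (specInfo (margSY p₂) s₂) (specInfo (margSZ p₂) s₂)
      ≤ min (specInfo (margSY (prodDist p₁ p₂)) (s₁, s₂))
          (specInfo (margSZ (prodDist p₁ p₂)) (s₁, s₂)) := by
  have hY₁ (x) : 0 ≤ margSY p₁ x := sum_nonneg fun _ _ => hp₁ _
  have hY₂ (x) : 0 ≤ margSY p₂ x := sum_nonneg fun _ _ => hp₂ _
  have hZ₁ (x) : 0 ≤ margSZ p₁ x := sum_nonneg fun _ _ => hp₁ _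
  have hZ₂ (x) : 0 ≤ margSZ p₂ x := sum_nonneg fun _ _ => hp₂ _
  rw [margSY_prodDist, margSZ_prodDist,
    specInfo_jointProd hY₁ hY₂ (by rwa [sum_margSY]) (by rwa [sum_margSY]),
    specInfo_jointProd hZ₁ hZ₂ (by rwa [sum_margSZ]) (by rwa [sum_margSZ])]
  exact min_add_min_le_min_add_add

end prodDist

theorem sum_sum_mul_mul_add_eq {ι κ : Type} [Fintype ι] [Fintype κ] {w : ι → ℝ} {v : κ → ℝ}
    (hw : ∑ i, w i = 1) (hv : ∑ j, v j = 1) (f : ι → ℝ) (g : κ → ℝ) :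
    ∑ i, ∑ j, w i * v j * (f i + g j) = ∑ i, w i * f i + ∑ j, v j * g j := by
  calc ∑ i, ∑ j, w i * v j * (f i + g j)
      = (∑ i, w i * f i) * (∑ j, v j) + (∑ j, v j * g j) * ∑ i, w i := by
        rw [sum_mul_sum, sum_mul_sum, sum_comm (f := fun j i => v j * g j * w i),
          ← sum_add_distrib]
        exact sum_congr rfl fun i _ => by
          rw [← sum_add_distrib]
          exact sum_congr rfl fun j _ => by ring
    _ = ∑ i, w i * f i + ∑ j, v j * g j := by rw [hw, hv, mul_one, mul_one]

/-- `SI_min` is superadditive under independent combination. -/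
theorem SImin_superadditive
    {S1 Y1 Z1 S2 Y2 Z2 : Type} [Fintype S1] [Fintype Y1] [Fintype Z1]
    [Fintype S2] [Fintype Y2] [Fintype Z2]
    (p1 : S1 × Y1 × Z1 → ℝ) (p2 : S2 × Y2 × Z2 → ℝ)
    (hp1 : IsProbDist p1) (hp2 : IsProbDist p2) :
    SImin p1 + SImin p2 ≤ SImin (prodDist p1 p2) := by
  obtain ⟨hp1_nonneg, hp1_sum⟩ := hp1
  obtain ⟨hp2_nonneg, hp2_sum⟩ := hp2
  have hw1 (s) : 0 ≤ ∑ y, ∑ z, p1 (s, y, z) :=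
    sum_nonneg fun _ _ => sum_nonneg fun _ _ => hp1_nonneg _
  have hw2 (s) : 0 ≤ ∑ y, ∑ z, p2 (s, y, z) :=
    sum_nonneg fun _ _ => sum_nonneg fun _ _ => hp2_nonneg _
  simp only [Fintype.sum_prod_type] at hp1_sum hp2_sum
  rw [SImin, SImin, ← sum_sum_mul_mul_add_eq hp1_sum hp2_sum, SImin, Fintype.sum_prod_type]
  refine sum_le_sum fun s1 _ => sum_le_sum fun s2 _ => ?_
  rw [sum_sum_prodDist]
  obtain h | h1 := (hw1 s1).eq_or_lt
  · simp [← h]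
  obtain h | h2 := (hw2 s2).eq_or_lt
  · simp [← h]
  exact mul_le_mul_of_nonneg_left (min_specInfo_add_le_prodDist hp1_nonneg hp2_nonneg h1 h2)
    (by positivity)
end

section
/- The Gács–Körner-based shared information SI_∧(S;Y,Z) := max{I(Q;S) : Q = f(Y) = f'(Z) almost surely, for deterministic functions f, f'} is additive: if (S1,Y1,Z1) is independent of (S2,Y2,Z2), then SI_∧(S1S2; Y1Y2, Z1Z2) = SI_∧(S1;Y1,Z1) + SI_∧(S2;Y2,Z2). -/
open scoped BigOperators

/-- The Gács–Körner-based shared information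
`SI_∧(S;Y,Z) = max { I(Q;S) : Q = f(Y) = f'(Z) a.s. }`, where the optimization
runs over all finite random variables `Q` that are almost surely a deterministic
function both of `Y` and of `Z`. -/
noncomputable def SIwedge {S Y Z : Type} [Fintype S] [Fintype Y] [Fintype Z]
    (p : S × Y × Z → ℝ) : ℝ :=
  sSup { r : ℝ | ∃ (Q : Type) (instQ : Fintype Q) (_ : DecidableEq Q)
      (f : Y → Q) (f' : Z → Q),
      (∀ s y z, p (s, y, z) ≠ 0 → f y = f' z) ∧
      r = @mi2 Q S instQ _ (fun x => ∑ y, ∑ z, if f y = x.1 then p (x.2, y, z) else 0) }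

/-!
The Gács–Körner common part `K` of `(Y, Z)` is the partition of `Y ⊕ Z` into the connected
components of the bipartite graph joining `y` and `z` whenever `(y, z)` has positive probability.
`K` is a common function of `Y` and `Z`, and every common function `Q` is constant on these
components, hence a function of `K`; by data processing `I(Q;S) ≤ I(K;S)`, so
`SI_∧(S;Y,Z) = I(K;S)`. For an independent pair, freezing one coordinate on the support shows that
every common function of `(Y₁Y₂, Z₁Z₂)` is a function of `(K₁, K₂)` on the support, while
`(K₁, K₂)` is itself common. Hence `SI_∧(S₁S₂;Y₁Y₂,Z₁Z₂) = I(K₁K₂;S₁S₂)`, and mutual information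
is additive over independent pairs.
-/

open Finset Real

theorem sum_mul_log_sum_div_sum_le {ι : Type*} (s : Finset ι) {u v : ι → ℝ}
    (hu : ∀ i ∈ s, 0 ≤ u i) (hv : ∀ i ∈ s, 0 ≤ v i) (huv : ∀ i ∈ s, v i = 0 → u i = 0) :
    (∑ i ∈ s, u i) * log ((∑ i ∈ s, u i) / ∑ i ∈ s, v i) ≤ ∑ i ∈ s, u i * log (u i / v i) := by
  set V := ∑ i ∈ s, v i
  rcases (sum_nonneg hv).eq_or_lt with hV | hV
  · have hu0 : ∀ i ∈ s, u i = 0 := fun i hi =>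
      huv i hi ((sum_eq_zero_iff_of_nonneg hv).1 hV.symm i hi)
    rw [sum_eq_zero hu0, zero_mul, sum_eq_zero fun i hi => by rw [hu0 i hi, zero_mul]]
  -- Jensen for `x ↦ x log x` with weights `v i / V` at the points `u i / v i`.
  have hweight : ∀ i ∈ s, v i / V * (u i / v i) = u i / V := fun i hi => by
    rcases eq_or_ne (v i) 0 with h | h
    · simp [h, huv i hi h]
    · field_simp
  have hjensen := convexOn_mul_log.map_sum_le (t := s) (w := fun i => v i / V)
    (p := fun i => u i / v i) (fun i hi => div_nonneg (hv i hi) hV.le)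
    (by rw [← sum_div, div_self hV.ne'])
    (fun i hi => Set.mem_Ici.2 (div_nonneg (hu i hi) (hv i hi)))
  simp only [smul_eq_mul, ← mul_assoc] at hjensen
  rw [sum_congr rfl hweight, ← sum_div] at hjensen
  have hrhs : ∑ i ∈ s, v i / V * (u i / v i) * log (u i / v i) =
      (∑ i ∈ s, u i * log (u i / v i)) / V := by
    rw [sum_div]
    exact sum_congr rfl fun i hi => by rw [hweight i hi, div_mul_eq_mul_div]
  rwa [hrhs, div_mul_eq_mul_div, div_le_div_iff_of_pos_right hV] at hjensen

lemma sum_pos_of_ne_zero {ι : Type*} [Fintype ι] {w : ι → ℝ} (hw : ∀ i, 0 ≤ w i) {i : ι}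
    (hi : w i ≠ 0) : 0 < ∑ j, w j :=
  sum_pos' (fun j _ => hw j) ⟨i, mem_univ i, (hw i).lt_of_ne' hi⟩

lemma sum_sum_sum_sum_mul {A₁ B₁ A₂ B₂ : Type} [Fintype A₁] [Fintype B₁] [Fintype A₂]
    [Fintype B₂] (f : A₁ → B₁ → ℝ) (g : A₂ → B₂ → ℝ) :
    ∑ a₁, ∑ a₂, ∑ b₁, ∑ b₂, f a₁ b₁ * g a₂ b₂ = (∑ a₁, ∑ b₁, f a₁ b₁) * ∑ a₂, ∑ b₂, g a₂ b₂ := by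
  simp only [sum_mul_sum]

lemma mul_mul_log_div_mul {x₁ x₂ d₁ d₂ : ℝ} (h₁ : x₁ ≠ 0 → d₁ ≠ 0) (h₂ : x₂ ≠ 0 → d₂ ≠ 0) :
    x₁ * x₂ * log (x₁ * x₂ / (d₁ * d₂)) = x₁ * log (x₁ / d₁) * x₂ + x₁ * (x₂ * log (x₂ / d₂)) := by
  rcases eq_or_ne x₁ 0 with hx₁ | hx₁
  · simp [hx₁]
  rcases eq_or_ne x₂ 0 with hx₂ | hx₂
  · simp [hx₂]
  rw [mul_div_mul_comm, log_mul (div_ne_zero hx₁ (h₁ hx₁)) (div_ne_zero hx₂ (h₂ hx₂))]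
  ring

/-- The joint law of `(g A, B)`, for `q` the joint law of `(A, B)`. -/
def mapFst {A A' B : Type} [Fintype A] [DecidableEq A'] (g : A → A') (q : A × B → ℝ) :
    A' × B → ℝ :=
  fun x => ∑ a, if g a = x.1 then q (a, x.2) else 0

lemma mapFst_apply_eq_sum_filter {A A' B : Type} [Fintype A] [DecidableEq A'] (g : A → A')
    (q : A × B → ℝ) (a' : A') (b : B) :
    mapFst g q (a', b) = ∑ a ∈ univ.filter (g · = a'), q (a, b) :=
  (sum_filter _ _).symm

section MutualInformation

variable {A B : Type} [Fintype A] [Fintype B]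

lemma mi2_eq_sub {q : A × B → ℝ} (hq : ∀ x, 0 ≤ q x) :
    mi2 q = ∑ a, ∑ b, q (a, b) * log (q (a, b) / ∑ b', q (a, b'))
      - ∑ b, (∑ a, q (a, b)) * log (∑ a, q (a, b)) := by
  have hterm : ∀ a b, q (a, b) * log (q (a, b) / ((∑ b', q (a, b')) * ∑ a', q (a', b))) =
      q (a, b) * log (q (a, b) / ∑ b', q (a, b')) - q (a, b) * log (∑ a', q (a', b)) := by
    intro a b
    rcases eq_or_ne (q (a, b)) 0 with h | h
    · simp [h]
    have hrow := sum_pos_of_ne_zero (fun b' => hq (a, b')) h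
    have hcol := sum_pos_of_ne_zero (fun a' => hq (a', b)) h
    rw [div_mul_eq_div_div, log_div (by positivity) hcol.ne', mul_sub]
  simp only [mi2, hterm, sum_sub_distrib]
  rw [sum_comm (f := fun a b => q (a, b) * log (∑ a', q (a', b)))]
  simp only [sum_mul]

theorem mi2_mapFst_le {A' : Type} [Fintype A'] [DecidableEq A'] {q : A × B → ℝ}
    (hq : ∀ x, 0 ≤ q x) (g : A → A') : mi2 (mapFst g q) ≤ mi2 q := by
  have hq' : ∀ x, 0 ≤ mapFst g q x := fun x =>
    sum_nonneg fun a _ => by split_ifs <;> simp [hq]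
  have hcol : ∀ b, ∑ a', mapFst g q (a', b) = ∑ a, q (a, b) := fun b => by
    simp only [mapFst_apply_eq_sum_filter]
    exact sum_fiberwise univ g (fun a => q (a, b))
  have hrow : ∀ a', ∑ b, mapFst g q (a', b) = ∑ a ∈ univ.filter (g · = a'), ∑ b, q (a, b) :=
    fun a' => by simp only [mapFst_apply_eq_sum_filter]; exact sum_comm
  rw [mi2_eq_sub hq, mi2_eq_sub hq']
  simp only [hcol]
  rw [sub_le_sub_iff_right, ← sum_fiberwise univ g]
  refine sum_le_sum fun a' _ => (sum_le_sum fun b _ => ?_).trans_eq sum_comm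
  rw [mapFst_apply_eq_sum_filter, hrow]
  exact sum_mul_log_sum_div_sum_le _ (fun a _ => hq _) (fun a _ => sum_nonneg fun _ _ => hq _)
    fun a _ h => (sum_eq_zero_iff_of_nonneg fun _ _ => hq _).1 h b (mem_univ b)

end MutualInformation

theorem mi2_mul {A₁ B₁ A₂ B₂ : Type} [Fintype A₁] [Fintype B₁] [Fintype A₂] [Fintype B₂]
    {q₁ : A₁ × B₁ → ℝ} {q₂ : A₂ × B₂ → ℝ} (hq₁ : IsProbDist q₁) (hq₂ : IsProbDist q₂) :
    mi2 (fun x : (A₁ × A₂) × (B₁ × B₂) => q₁ (x.1.1, x.2.1) * q₂ (x.1.2, x.2.2))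
      = mi2 q₁ + mi2 q₂ := by
  have hterm : ∀ a₁ a₂ (b : B₁ × B₂), q₁ (a₁, b.1) * q₂ (a₂, b.2) *
      log (q₁ (a₁, b.1) * q₂ (a₂, b.2) / ((∑ b' : B₁ × B₂, q₁ (a₁, b'.1) * q₂ (a₂, b'.2)) *
        ∑ a : A₁ × A₂, q₁ (a.1, b.1) * q₂ (a.2, b.2))) =
      q₁ (a₁, b.1) * log (q₁ (a₁, b.1) / ((∑ b', q₁ (a₁, b')) * ∑ a, q₁ (a, b.1))) * q₂ (a₂, b.2) +
      q₁ (a₁, b.1) *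
        (q₂ (a₂, b.2) * log (q₂ (a₂, b.2) / ((∑ b', q₂ (a₂, b')) * ∑ a, q₂ (a, b.2)))) := by
    intro a₁ a₂ ⟨b₁, b₂⟩
    simp only [Fintype.sum_prod_type, ← sum_mul_sum]
    rw [mul_mul_mul_comm]
    exact mul_mul_log_div_mul
      (fun h => mul_ne_zero (sum_pos_of_ne_zero (fun b => hq₁.1 (a₁, b)) h).ne'
        (sum_pos_of_ne_zero (fun a => hq₁.1 (a, b₁)) h).ne')
      (fun h => mul_ne_zero (sum_pos_of_ne_zero (fun b => hq₂.1 (a₂, b)) h).ne'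
        (sum_pos_of_ne_zero (fun a => hq₂.1 (a, b₂)) h).ne')
  have hsum₁ : ∑ a, ∑ b, q₁ (a, b) = 1 := by rw [← Fintype.sum_prod_type, hq₁.2]
  have hsum₂ : ∑ a, ∑ b, q₂ (a, b) = 1 := by rw [← Fintype.sum_prod_type, hq₂.2]
  unfold mi2
  rw [Fintype.sum_prod_type]
  simp only [hterm]
  simp only [Fintype.sum_prod_type, sum_add_distrib, sum_sum_sum_sum_mul, hsum₁, hsum₂, mul_one,
    one_mul]

section GacsKorner

variable {S Y Z : Type}

def AgreeOnSupport {Q : Type} (p : S × Y × Z → ℝ) (f : Y → Q) (f' : Z → Q) : Prop :=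
  ∀ s y z, p (s, y, z) ≠ 0 → f y = f' z

def gkRel (p : S × Y × Z → ℝ) : Y ⊕ Z → Y ⊕ Z → Prop
  | .inl y, .inr z => ∃ s, p (s, y, z) ≠ 0
  | _, _ => False

def GKCommon (p : S × Y × Z → ℝ) : Type := Quot (gkRel p)

noncomputable instance [Fintype Y] [Fintype Z] (p : S × Y × Z → ℝ) : Fintype (GKCommon p) :=
  @Fintype.ofFinite (Quot (gkRel p)) inferInstance

noncomputable instance (p : S × Y × Z → ℝ) : DecidableEq (GKCommon p) := Classical.decEq _

def gkLeft (p : S × Y × Z → ℝ) (y : Y) : GKCommon p := Quot.mk _ (.inl y)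

def gkRight (p : S × Y × Z → ℝ) (z : Z) : GKCommon p := Quot.mk _ (.inr z)

lemma agreeOnSupport_gkLeft_gkRight (p : S × Y × Z → ℝ) :
    AgreeOnSupport p (gkLeft p) (gkRight p) :=
  fun s _ _ h => Quot.sound ⟨s, h⟩

lemma AgreeOnSupport.eq_of_gkLeft_eq {Q : Type} {p : S × Y × Z → ℝ} {f : Y → Q} {f' : Z → Q}
    (hf : AgreeOnSupport p f f') {y y' : Y} (hy : gkLeft p y = gkLeft p y') : f y = f y' := by
  have hF : ∀ a b, gkRel p a b → Sum.elim f f' a = Sum.elim f f' b := by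
    rintro (y | _) (_ | z) h <;> simp only [gkRel] at h
    obtain ⟨s, h⟩ := h
    exact hf s y z h
  exact congrArg (Quot.lift (Sum.elim f f') hF) hy

end GacsKorner

/-- The joint law of `(f Y, S)`. -/
def inducedDist {S Y Z Q : Type} [Fintype Y] [Fintype Z] [DecidableEq Q] (p : S × Y × Z → ℝ)
    (f : Y → Q) : Q × S → ℝ :=
  fun x => ∑ y, ∑ z, if f y = x.1 then p (x.2, y, z) else 0

section InducedDist

variable {S Y Z Q Q' : Type} [Fintype Y] [Fintype Z] [DecidableEq Q] [DecidableEq Q']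

lemma inducedDist_congr {p : S × Y × Z → ℝ} {f g : Y → Q}
    (h : ∀ s y z, p (s, y, z) ≠ 0 → f y = g y) : inducedDist p f = inducedDist p g := by
  funext x
  refine sum_congr rfl fun y _ => sum_congr rfl fun z _ => ?_
  by_cases hp : p (x.2, y, z) = 0
  · simp [hp]
  · rw [h _ _ _ hp]

lemma inducedDist_comp [Fintype Q] (p : S × Y × Z → ℝ) (g : Q → Q') (f : Y → Q) :
    inducedDist p (g ∘ f) = mapFst g (inducedDist p f) := by
  funext x
  simp only [inducedDist, mapFst, Function.comp_apply, ite_sum_zero]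
  symm
  rw [sum_comm]
  refine sum_congr rfl fun y _ => ?_
  rw [sum_comm]
  refine sum_congr rfl fun z _ => ?_
  rw [sum_eq_single (f y) (fun c _ hc => by simp [Ne.symm hc]) (by simp), if_pos rfl]

variable [Fintype S]

lemma IsProbDist.inducedDist [Fintype Q] {p : S × Y × Z → ℝ} (hp : IsProbDist p) (f : Y → Q) :
    IsProbDist (inducedDist p f) := by
  refine ⟨fun x => sum_nonneg fun y _ => sum_nonneg fun z _ => ?_, ?_⟩
  · split_ifs
    exacts [hp.1 _, le_rfl]
  · rw [← hp.2, Fintype.sum_prod_type, sum_comm]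
    simp only [_root_.inducedDist, Fintype.sum_prod_type]
    refine sum_congr rfl fun s _ => ?_
    rw [sum_comm]
    refine sum_congr rfl fun y _ => ?_
    rw [sum_comm]
    simp

theorem mi2_inducedDist_le [Fintype Q] [Fintype Q'] {p : S × Y × Z → ℝ} (hp : IsProbDist p)
    {f : Y → Q} {f₀ : Y → Q'}
    (hf : Function.FactorsThrough (fun x : {x // p x ≠ 0} => f x.1.2.1) (fun x => f₀ x.1.2.1)) :
    mi2 (inducedDist p f) ≤ mi2 (inducedDist p f₀) := by
  obtain ⟨x₀, -⟩ : ∃ x, p x ≠ 0 := by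
    by_contra! h
    simpa [h] using hp.2
  set g : Q' → Q := Function.extend (fun x : {x // p x ≠ 0} => f₀ x.1.2.1) (fun x => f x.1.2.1)
    fun _ => f x₀.2.1
  have hfg : ∀ s y z, p (s, y, z) ≠ 0 → f y = (g ∘ f₀) y := fun s y z h =>
    (hf.extend_apply (fun _ => f x₀.2.1) ⟨(s, y, z), h⟩).symm
  rw [inducedDist_congr hfg, inducedDist_comp]
  exact mi2_mapFst_le (hp.inducedDist f₀).1 g

theorem SIwedge_eq_of_forall_factorsThrough [Fintype Q] {p : S × Y × Z → ℝ} (hp : IsProbDist p)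
    {f₀ : Y → Q} {f₀' : Z → Q} (h₀ : AgreeOnSupport p f₀ f₀')
    (hmax : ∀ (R : Type) [Fintype R] [DecidableEq R] (f : Y → R) (f' : Z → R),
      AgreeOnSupport p f f' →
        Function.FactorsThrough (fun x : {x // p x ≠ 0} => f x.1.2.1) (fun x => f₀ x.1.2.1)) :
    SIwedge p = mi2 (inducedDist p f₀) := by
  refine IsGreatest.csSup_eq ⟨⟨Q, _, _, f₀, f₀', h₀, rfl⟩, ?_⟩
  rintro r ⟨R, _, _, f, f', hf, rfl⟩
  exact mi2_inducedDist_le hp (hmax R f f' hf)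

end InducedDist

theorem SIwedge_eq_mi2_gkLeft {S Y Z : Type} [Fintype S] [Fintype Y] [Fintype Z]
    {p : S × Y × Z → ℝ} (hp : IsProbDist p) : SIwedge p = mi2 (inducedDist p (gkLeft p)) :=
  SIwedge_eq_of_forall_factorsThrough hp (agreeOnSupport_gkLeft_gkRight p)
    fun _ _ _ _ _ hf _ _ hx => hf.eq_of_gkLeft_eq hx

section Independent

variable {S₁ Y₁ Z₁ S₂ Y₂ Z₂ : Type} {p₁ : S₁ × Y₁ × Z₁ → ℝ} {p₂ : S₂ × Y₂ × Z₂ → ℝ}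

lemma AgreeOnSupport.factorsThrough_prodDist {Q : Type} {f : Y₁ × Y₂ → Q} {f' : Z₁ × Z₂ → Q}
    (hf : AgreeOnSupport (prodDist p₁ p₂) f f') :
    Function.FactorsThrough (fun x : {x // prodDist p₁ p₂ x ≠ 0} => f x.1.2.1)
      (fun x => (gkLeft p₁ x.1.2.1.1, gkLeft p₂ x.1.2.1.2)) := by
  rintro ⟨⟨⟨s₁, s₂⟩, ⟨y₁, y₂⟩, ⟨z₁, z₂⟩⟩, hx⟩ ⟨⟨⟨s₁', s₂'⟩, ⟨y₁', y₂'⟩, ⟨z₁', z₂'⟩⟩, hx'⟩ hgk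
  obtain ⟨hgk₁, hgk₂⟩ := Prod.mk.inj hgk
  -- Freezing one coordinate on the support leaves a pair agreeing on the support of the other.
  calc f (y₁, y₂) = f (y₁', y₂) :=
        AgreeOnSupport.eq_of_gkLeft_eq (f := fun y => f (y, y₂)) (f' := fun z => f' (z, z₂))
          (fun s y z h => hf (s, s₂) (y, y₂) (z, z₂) (mul_ne_zero h (right_ne_zero_of_mul hx)))
          hgk₁
    _ = f (y₁', y₂') :=
        AgreeOnSupport.eq_of_gkLeft_eq (f := fun y => f (y₁', y)) (f' := fun z => f' (z₁', z))
          (fun s y z h => hf (s₁', s) (y₁', y) (z₁', z) (mul_ne_zero (left_ne_zero_of_mul hx') h))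
          hgk₂

variable [Fintype Y₁] [Fintype Z₁] [Fintype Y₂] [Fintype Z₂]

lemma inducedDist_prodDist {Q₁ Q₂ : Type} [DecidableEq Q₁] [DecidableEq Q₂] (f₁ : Y₁ → Q₁)
    (f₂ : Y₂ → Q₂) :
    inducedDist (prodDist p₁ p₂) (fun y => (f₁ y.1, f₂ y.2)) =
      fun x => inducedDist p₁ f₁ (x.1.1, x.2.1) * inducedDist p₂ f₂ (x.1.2, x.2.2) := by
  funext ⟨⟨q₁, q₂⟩, s₁, s₂⟩
  have hterm : ∀ y₁ y₂ z₁ z₂, (if (f₁ y₁, f₂ y₂) = (q₁, q₂) then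
      prodDist p₁ p₂ ((s₁, s₂), (y₁, y₂), (z₁, z₂)) else 0) =
      (if f₁ y₁ = q₁ then p₁ (s₁, y₁, z₁) else 0) * (if f₂ y₂ = q₂ then p₂ (s₂, y₂, z₂) else 0) := by
    intro y₁ y₂ z₁ z₂
    simp only [Prod.mk.injEq, ite_zero_mul_ite_zero, prodDist]
  simp only [inducedDist, Fintype.sum_prod_type, hterm, sum_sum_sum_sum_mul]

variable [Fintype S₁] [Fintype S₂]

lemma IsProbDist.prodDist (hp₁ : IsProbDist p₁) (hp₂ : IsProbDist p₂) :
    IsProbDist (prodDist p₁ p₂) := by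
  refine ⟨fun x => mul_nonneg (hp₁.1 _) (hp₂.1 _), ?_⟩
  let e : (S₁ × Y₁ × Z₁) × (S₂ × Y₂ × Z₂) ≃ (S₁ × S₂) × (Y₁ × Y₂) × (Z₁ × Z₂) :=
    (Equiv.prodProdProdComm _ _ _ _).trans
      ((Equiv.refl _).prodCongr (Equiv.prodProdProdComm _ _ _ _))
  rw [← Fintype.sum_equiv e (fun x => p₁ x.1 * p₂ x.2) _ fun _ => rfl, Fintype.sum_prod_type,
    ← Fintype.sum_mul_sum, hp₁.2, hp₂.2, one_mul]

theorem SIwedge_prodDist (hp₁ : IsProbDist p₁) (hp₂ : IsProbDist p₂) :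
    SIwedge (prodDist p₁ p₂) =
      mi2 (inducedDist (prodDist p₁ p₂) (fun y => (gkLeft p₁ y.1, gkLeft p₂ y.2))) :=
  SIwedge_eq_of_forall_factorsThrough (hp₁.prodDist hp₂)
    (f₀' := fun z => (gkRight p₁ z.1, gkRight p₂ z.2))
    (fun _ _ _ h => Prod.ext (agreeOnSupport_gkLeft_gkRight p₁ _ _ _ (left_ne_zero_of_mul h))
      (agreeOnSupport_gkLeft_gkRight p₂ _ _ _ (right_ne_zero_of_mul h)))
    fun _ _ _ _ _ hf => hf.factorsThrough_prodDist

end Independent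

/-- `SI_∧` is additive under independent combination. -/
theorem SIwedge_additive
    {S1 Y1 Z1 S2 Y2 Z2 : Type} [Fintype S1] [Fintype Y1] [Fintype Z1]
    [Fintype S2] [Fintype Y2] [Fintype Z2]
    (p1 : S1 × Y1 × Z1 → ℝ) (p2 : S2 × Y2 × Z2 → ℝ)
    (hp1 : IsProbDist p1) (hp2 : IsProbDist p2) :
    SIwedge (prodDist p1 p2) = SIwedge p1 + SIwedge p2 := by
  rw [SIwedge_prodDist hp1 hp2, inducedDist_prodDist,
    mi2_mul (hp1.inducedDist _) (hp2.inducedDist _), SIwedge_eq_mi2_gkLeft hp1,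
    SIwedge_eq_mi2_gkLeft hp2]
end

section
/- SI_GH is subadditive: if (S1,Y1,Z1) is independent of (S2,Y2,Z2), then SI_GH(S1S2;Y1Y2,Z1Z2) ≤ SI_GH(S1;Y1,Z1) + SI_GH(S2;Y2,Z2). Consequently, combined with superadditivity, SI_GH is additive. -/
open scoped BigOperators

/-- `SI_GH(S;Y,Z) = max { I(Q;S) : I(S;Q|Y) = I(S;Q|Z) = 0 }`, the supremum
running over all finite random variables `Q` jointly distributed with `(S,Y,Z)`
(extending the given joint distribution) such that `S ⊥ Q | Y` and `S ⊥ Q | Z`. -/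
noncomputable def SIGH {S Y Z : Type} [Fintype S] [Fintype Y] [Fintype Z]
    (p : S × Y × Z → ℝ) : ℝ :=
  sSup { r : ℝ | ∃ (Q : Type) (instQ : Fintype Q) (e : S × Y × Z × Q → ℝ),
      (∀ x, 0 ≤ e x) ∧
      (∀ s y z, (∑ q ∈ @Finset.univ Q instQ, e (s, y, z, q)) = p (s, y, z)) ∧
      @cmi3 S Q Y _ instQ _ (fun x => ∑ z, e (x.1, x.2.2, z, x.2.1)) = 0 ∧
      @cmi3 S Q Z _ instQ _ (fun x => ∑ y, e (x.1, y, x.2.2, x.2.1)) = 0 ∧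
      r = @mi2 S Q _ instQ (fun x => ∑ y, ∑ z, e (x.1, y, z, x.2)) }

/-! Subadditivity. Let `Q` be admissible for the pair of independent systems, with joint law
`e` of `(S₁S₂, Y₁Y₂, Z₁Z₂, Q)`. By the chain rule `I(S₁S₂; Q) = I(S₁; Q) + I(S₂; Q | S₁)`, and
`I(S₂; Q | S₁)` is an average of `I(S₂; Q | S₁ = s₁)`, so it is at most its value at some `s₁`
of positive probability. The law of `(S₁, Y₁, Z₁, Q)` and the law of `(S₂, Y₂, Z₂, Q)` given
`S₁ = s₁` are admissible for the two factors: since `P(S | Y)` is the product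
`P(S₁ | Y₁) P(S₂ | Y₂)`, the constraint `S ⊥ Q | Y` forces
`P(S, Q | Y) = P(S₁ | Y₁) P(S₂ | Y₂) g(Q, Y)`, and summing out `(S₂, Y₂)`, resp. `Y₁` at fixed
`S₁ = s₁`, keeps this factorised shape. The same holds with `Z` in place of `Y`.

Superadditivity: the pair `(Q₁, Q₂)` of admissible variables for the two factors is admissible
for the product, and mutual information is additive over independent systems.

Conditional independence is used in factorised form; it is equivalent to vanishing conditional
mutual information by the equality case of Gibbs' inequality. -/

open Finset Real InformationTheory

lemma mul_log_div_sub_sub_eq_mul_klFun {p q : ℝ} (hq : 0 < q) :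
    p * log (p / q) - (p - q) = q * klFun (p / q) := by
  rw [klFun_apply]
  field_simp
  ring

lemma sub_le_mul_log_div {p q : ℝ} (hp : 0 ≤ p) (hq : 0 ≤ q) (hpq : q = 0 → p = 0) :
    p - q ≤ p * log (p / q) := by
  rcases hq.eq_or_lt with rfl | hq
  · simp [hpq rfl]
  · have := mul_log_div_sub_sub_eq_mul_klFun (p := p) hq
    nlinarith [klFun_nonneg (div_nonneg hp hq.le)]

lemma mul_log_div_eq_sub_iff {p q : ℝ} (hp : 0 ≤ p) (hq : 0 ≤ q) (hpq : q = 0 → p = 0) :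
    p * log (p / q) = p - q ↔ p = q := by
  rcases hq.eq_or_lt with rfl | hq
  · simp [hpq rfl]
  · rw [← sub_eq_zero, mul_log_div_sub_sub_eq_mul_klFun hq, mul_eq_zero,
      klFun_eq_zero_iff (div_nonneg hp hq.le), div_eq_one_iff_eq hq.ne']
    simp [hq.ne']

section Gibbs

variable {ι : Type} [Fintype ι] {p q : ι → ℝ}

lemma sum_sub_sum_le_sum_mul_log_div (hp : ∀ i, 0 ≤ p i) (hq : ∀ i, 0 ≤ q i)
    (hpq : ∀ i, q i = 0 → p i = 0) :
    ∑ i, p i - ∑ i, q i ≤ ∑ i, p i * log (p i / q i) := by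
  rw [← sum_sub_distrib]
  exact sum_le_sum fun i _ => sub_le_mul_log_div (hp i) (hq i) (hpq i)

lemma eq_of_sum_mul_log_div_eq_zero (hp : ∀ i, 0 ≤ p i) (hq : ∀ i, 0 ≤ q i)
    (hpq : ∀ i, q i = 0 → p i = 0) (hsum : ∑ i, q i = ∑ i, p i)
    (h : ∑ i, p i * log (p i / q i) = 0) (i : ι) : p i = q i := by
  have hgap : ∑ i, (p i * log (p i / q i) - (p i - q i)) = 0 := by
    rw [sum_sub_distrib, sum_sub_distrib, h, hsum]
    ring
  rw [sum_eq_zero_iff_of_nonneg fun i _ =>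
    sub_nonneg.2 (sub_le_mul_log_div (hp i) (hq i) (hpq i))] at hgap
  exact (mul_log_div_eq_sub_iff (hp i) (hq i) (hpq i)).1 (sub_eq_zero.1 (hgap i (mem_univ i)))

end Gibbs

lemma sum_mul_sum_prodProdProdComm {A1 A2 B1 B2 : Type} [Fintype A1] [Fintype A2]
    [Fintype B1] [Fintype B2] (f : A1 × B1 → ℝ) (g : A2 × B2 → ℝ) :
    ∑ x : (A1 × A2) × (B1 × B2), f (x.1.1, x.2.1) * g (x.1.2, x.2.2) =
      (∑ x, f x) * ∑ x, g x := by
  rw [Fintype.sum_mul_sum, ← Fintype.sum_prod_type']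
  exact Fintype.sum_equiv (Equiv.prodProdProdComm A1 A2 B1 B2) _ _ fun _ => rfl

lemma le_sum_snd {A B : Type} [Fintype B] {p : A × B → ℝ} (hp : ∀ x, 0 ≤ p x) (a : A) (b : B) :
    p (a, b) ≤ ∑ b', p (a, b') :=
  single_le_sum (f := fun b' => p (a, b')) (fun _ _ => hp _) (mem_univ b)

lemma le_sum_fst {A B : Type} [Fintype A] {p : A × B → ℝ} (hp : ∀ x, 0 ≤ p x) (a : A) (b : B) :
    p (a, b) ≤ ∑ a', p (a', b) :=
  single_le_sum (f := fun a' => p (a', b)) (fun _ _ => hp _) (mem_univ a)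

section MutualInformation

variable {A B : Type} [Fintype A] [Fintype B] {p : A × B → ℝ}

lemma mi2_eq_sum :
    mi2 p = ∑ x, p x * log (p x / ((∑ b, p (x.1, b)) * ∑ a, p (a, x.2))) := by
  rw [Fintype.sum_prod_type]
  rfl

lemma mi2_le_card (hp : ∀ x, 0 ≤ p x) : mi2 p ≤ Fintype.card A := by
  have hrow : ∀ a,
      ∑ b, p (a, b) * log (p (a, b) / ((∑ b', p (a, b')) * ∑ a', p (a', b))) ≤ 1 := by
    intro a
    set X := ∑ b', p (a, b')
    calc _ ≤ ∑ b, p (a, b) / X := sum_le_sum fun b _ => ?_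
      _ = X / X := by rw [sum_div]
      _ ≤ 1 := div_self_le_one X
    set Y := ∑ a', p (a', b)
    have hX : 0 ≤ X := (hp _).trans (le_sum_snd hp a b)
    have hY : 0 ≤ Y := (hp _).trans (le_sum_fst hp a b)
    calc p (a, b) * log (p (a, b) / (X * Y)) ≤ p (a, b) * (p (a, b) / (X * Y)) :=
          mul_le_mul_of_nonneg_left (log_le_self (div_nonneg (hp _) (mul_nonneg hX hY))) (hp _)
      _ = p (a, b) / X * (p (a, b) / Y) := by ring
      _ ≤ p (a, b) / X := mul_le_of_le_one_right (div_nonneg (hp _) hX)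
          (div_le_one_of_le₀ (le_sum_fst hp a b) hY)
  calc mi2 p ≤ ∑ _ : A, (1 : ℝ) := sum_le_sum fun a _ => hrow a
    _ = Fintype.card A := by simp

lemma sum_mul_marginals :
    ∑ x : A × B, (∑ b, p (x.1, b)) * ∑ a, p (a, x.2) = (∑ x, p x) * ∑ x, p x := by
  simp only [Fintype.sum_prod_type]
  rw [← Fintype.sum_mul_sum, sum_comm (γ := B)]

lemma eq_zero_of_marginals_mul_eq_zero (hp : ∀ x, 0 ≤ p x) (x : A × B)
    (h : (∑ b, p (x.1, b)) * ∑ a, p (a, x.2) = 0) : p x = 0 := by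
  rcases mul_eq_zero.1 h with h | h
  · exact le_antisymm (h ▸ le_sum_snd hp x.1 x.2) (hp x)
  · exact le_antisymm (h ▸ le_sum_fst hp x.1 x.2) (hp x)

lemma mi2_nonneg (hp : ∀ x, 0 ≤ p x) (h1 : ∑ x, p x = 1) : 0 ≤ mi2 p := by
  have := sum_sub_sum_le_sum_mul_log_div hp
    (fun x => mul_nonneg ((hp x).trans (le_sum_snd hp _ _)) ((hp x).trans (le_sum_fst hp _ _)))
    (eq_zero_of_marginals_mul_eq_zero hp)
  rw [sum_mul_marginals, h1] at this
  rw [mi2_eq_sum]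
  linarith

lemma eq_mul_of_mi2_eq_zero (hp : ∀ x, 0 ≤ p x) (h1 : ∑ x, p x = 1) (h : mi2 p = 0)
    (a : A) (b : B) : p (a, b) = (∑ b', p (a, b')) * ∑ a', p (a', b) :=
  eq_of_sum_mul_log_div_eq_zero hp
    (fun x => mul_nonneg ((hp x).trans (le_sum_snd hp _ _)) ((hp x).trans (le_sum_fst hp _ _)))
    (eq_zero_of_marginals_mul_eq_zero hp) (by rw [sum_mul_marginals, h1, one_mul])
    (by rwa [← mi2_eq_sum]) (a, b)

end MutualInformation

lemma mul_log_mul_div_mul_mul {p X1 Y1 q X2 Y2 : ℝ} (hp : 0 ≤ p) (hq : 0 ≤ q)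
    (hpX : p ≤ X1) (hpY : p ≤ Y1) (hqX : q ≤ X2) (hqY : q ≤ Y2) :
    p * q * log (p * q / ((X1 * X2) * (Y1 * Y2))) =
      p * log (p / (X1 * Y1)) * q + p * (q * log (q / (X2 * Y2))) := by
  rcases hp.eq_or_lt with rfl | hp
  · simp
  rcases hq.eq_or_lt with rfl | hq
  · simp
  have hX1 := hp.trans_le hpX
  have hY1 := hp.trans_le hpY
  have hX2 := hq.trans_le hqX
  have hY2 := hq.trans_le hqY
  rw [show p * q / ((X1 * X2) * (Y1 * Y2)) = p / (X1 * Y1) * (q / (X2 * Y2)) by field_simp,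
    log_mul (by positivity) (by positivity)]
  ring

lemma mi2_prod {A1 B1 A2 B2 : Type} [Fintype A1] [Fintype B1] [Fintype A2] [Fintype B2]
    {p : A1 × B1 → ℝ} {q : A2 × B2 → ℝ} (hp : ∀ x, 0 ≤ p x) (hq : ∀ x, 0 ≤ q x)
    (hp1 : ∑ x, p x = 1) (hq1 : ∑ x, q x = 1) :
    mi2 (fun x : (A1 × A2) × (B1 × B2) => p (x.1.1, x.2.1) * q (x.1.2, x.2.2)) =
      mi2 p + mi2 q := by
  have hrow : ∀ a1 a2, ∑ b : B1 × B2, p (a1, b.1) * q (a2, b.2) =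
      (∑ b, p (a1, b)) * ∑ b, q (a2, b) := fun _ _ => by
    rw [Fintype.sum_mul_sum, Fintype.sum_prod_type]
  have hcol : ∀ b1 b2, ∑ a : A1 × A2, p (a.1, b1) * q (a.2, b2) =
      (∑ a, p (a, b1)) * ∑ a, q (a, b2) := fun _ _ => by
    rw [Fintype.sum_mul_sum, Fintype.sum_prod_type]
  rw [mi2_eq_sum, mi2_eq_sum (p := p), mi2_eq_sum (p := q)]
  simp only [hrow, hcol]
  rw [sum_congr rfl fun x _ => mul_log_mul_div_mul_mul (hp _) (hq _) (le_sum_snd hp _ _)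
      (le_sum_fst hp _ _) (le_sum_snd hq _ _) (le_sum_fst hq _ _), sum_add_distrib,
    sum_mul_sum_prodProdProdComm
      (fun x => p x * log (p x / ((∑ b, p (x.1, b)) * ∑ a, p (a, x.2)))) q,
    sum_mul_sum_prodProdProdComm p
      (fun x => q x * log (q x / ((∑ b, q (x.1, b)) * ∑ a, q (a, x.2)))),
    hp1, hq1, mul_one, one_mul]

/-- `A ⊥ B | C` under `p`, in factorised form. -/
def IsCondIndep {A B C : Type} (p : A × B × C → ℝ) : Prop :=
  ∃ (f : A × C → ℝ) (g : B × C → ℝ), ∀ a b c, p (a, b, c) = f (a, c) * g (b, c)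

lemma IsCondIndep.div_const {A B C : Type} {p : A × B × C → ℝ} (h : IsCondIndep p) (r : ℝ) :
    IsCondIndep (fun x => p x / r) := by
  obtain ⟨f, g, hfg⟩ := h
  refine ⟨fun x => f x / r, g, fun a b c => ?_⟩
  show p (a, b, c) / r = f (a, c) / r * g (b, c)
  rw [hfg, div_mul_eq_mul_div]

lemma IsCondIndep.prod {A1 B1 C1 A2 B2 C2 : Type} {p1 : A1 × B1 × C1 → ℝ}
    {p2 : A2 × B2 × C2 → ℝ} (h1 : IsCondIndep p1) (h2 : IsCondIndep p2) :
    IsCondIndep (fun x : (A1 × A2) × (B1 × B2) × (C1 × C2) =>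
      p1 (x.1.1, x.2.1.1, x.2.2.1) * p2 (x.1.2, x.2.1.2, x.2.2.2)) := by
  obtain ⟨f1, g1, h1⟩ := h1
  obtain ⟨f2, g2, h2⟩ := h2
  refine ⟨fun x => f1 (x.1.1, x.2.1) * f2 (x.1.2, x.2.2),
    fun x => g1 (x.1.1, x.2.1) * g2 (x.1.2, x.2.2), fun a b c => ?_⟩
  simp only [h1, h2]
  ring

section CondIndep

variable {A B C : Type} [Fintype A] [Fintype B] {p : A × B × C → ℝ}

lemma IsCondIndep.mul_sum_eq (h : IsCondIndep p) (a : A) (b : B) (c : C) :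
    p (a, b, c) * ∑ a', ∑ b', p (a', b', c) = (∑ b', p (a, b', c)) * ∑ a', p (a', b, c) := by
  obtain ⟨f, g, hfg⟩ := h
  simp only [hfg, ← mul_sum, ← sum_mul]
  ring

lemma le_sum_sum (hp : ∀ x, 0 ≤ p x) (a : A) (b : B) (c : C) :
    p (a, b, c) ≤ ∑ a', ∑ b', p (a', b', c) :=
  (le_sum_snd (p := fun x : A × B => p (x.1, x.2, c)) (fun _ => hp _) a b).trans
    (single_le_sum (f := fun a' => ∑ b', p (a', b', c))
      (fun _ _ => sum_nonneg fun _ _ => hp _) (mem_univ a))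

lemma IsCondIndep.eq_mul_div (hp : ∀ x, 0 ≤ p x) (h : IsCondIndep p) (a : A) (b : B) (c : C) :
    p (a, b, c) =
      (∑ b', p (a, b', c)) * ((∑ a', p (a', b, c)) / ∑ a', ∑ b', p (a', b', c)) := by
  rcases eq_or_ne (∑ a', ∑ b', p (a', b', c)) 0 with h0 | h0
  · simp [h0, le_antisymm (h0 ▸ le_sum_sum hp a b c) (hp _)]
  · rw [← mul_div_assoc, eq_div_iff h0, h.mul_sum_eq]

lemma IsCondIndep.cmi3_eq_zero [Fintype C] (h : IsCondIndep p) : cmi3 p = 0 := by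
  refine sum_eq_zero fun a _ => sum_eq_zero fun b _ => sum_eq_zero fun c _ => ?_
  rw [h.mul_sum_eq]
  rcases eq_or_ne ((∑ b', p (a, b', c)) * ∑ a', p (a', b, c)) 0 with h0 | h0 <;> simp [h0]

lemma sum_sum_div_sum_sum (c : C) (h0 : ∑ a, ∑ b, p (a, b, c) ≠ 0) :
    ∑ x : A × B, p (x.1, x.2, c) / ∑ a, ∑ b, p (a, b, c) = 1 := by
  rw [← sum_div, Fintype.sum_prod_type, div_self h0]

lemma sum_mul_mi2_nonneg (hp : ∀ x, 0 ≤ p x) (c : C) :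
    0 ≤ (∑ a, ∑ b, p (a, b, c)) *
      mi2 (fun x : A × B => p (x.1, x.2, c) / ∑ a, ∑ b, p (a, b, c)) := by
  have hM : 0 ≤ ∑ a, ∑ b, p (a, b, c) := sum_nonneg fun _ _ => sum_nonneg fun _ _ => hp _
  rcases eq_or_ne (∑ a, ∑ b, p (a, b, c)) 0 with h0 | h0
  · simp [h0]
  · exact mul_nonneg hM
      (mi2_nonneg (fun _ => div_nonneg (hp _) hM) (sum_sum_div_sum_sum c h0))

variable [Fintype C]

lemma cmi3_eq_sum_mul_mi2 (hp : ∀ x, 0 ≤ p x) :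
    cmi3 p = ∑ c, (∑ a, ∑ b, p (a, b, c)) *
      mi2 (fun x : A × B => p (x.1, x.2, c) / ∑ a, ∑ b, p (a, b, c)) := by
  unfold cmi3
  conv_lhs => enter [2, a]; rw [sum_comm]
  rw [sum_comm]
  refine sum_congr rfl fun c _ => ?_
  set M := ∑ a, ∑ b, p (a, b, c)
  rcases eq_or_ne M 0 with h0 | h0
  · simp [h0, le_antisymm ((le_sum_sum hp _ _ c).trans_eq h0) (hp _)]
  unfold mi2
  rw [mul_sum]
  refine sum_congr rfl fun a _ => ?_
  rw [mul_sum]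
  refine sum_congr rfl fun b _ => ?_
  simp only [← sum_div]
  rw [show p (a, b, c) / M / ((∑ b', p (a, b', c)) / M * ((∑ a', p (a', b, c)) / M)) =
    p (a, b, c) * M / ((∑ b', p (a, b', c)) * ∑ a', p (a', b, c)) by field_simp]
  field_simp

lemma isCondIndep_of_cmi3_eq_zero (hp : ∀ x, 0 ≤ p x) (h : cmi3 p = 0) : IsCondIndep p := by
  rw [cmi3_eq_sum_mul_mi2 hp, sum_eq_zero_iff_of_nonneg fun c _ => sum_mul_mi2_nonneg hp c] at h
  refine ⟨fun x => ∑ b', p (x.1, b', x.2),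
    fun x => (∑ a', p (a', x.1, x.2)) / ∑ a', ∑ b', p (a', b', x.2), fun a b c => ?_⟩
  dsimp only
  set M := ∑ a', ∑ b', p (a', b', c)
  rcases eq_or_ne M 0 with h0 | h0
  · simp [h0, le_antisymm ((le_sum_sum hp a b c).trans_eq h0) (hp _)]
  have hmi : mi2 (fun x : A × B => p (x.1, x.2, c) / M) = 0 :=
    (mul_eq_zero.1 (h c (mem_univ c))).resolve_left h0
  have hfac : p (a, b, c) / M = (∑ b', p (a, b', c)) / M * ((∑ a', p (a', b, c)) / M) := by
    simpa only [← sum_div] using eq_mul_of_mi2_eq_zero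
      (fun _ => div_nonneg (hp _) (sum_nonneg fun _ _ => sum_nonneg fun _ _ => hp _))
      (sum_sum_div_sum_sum c h0) hmi a b
  calc p (a, b, c) = p (a, b, c) / M * M := (div_mul_cancel₀ _ h0).symm
    _ = _ := by rw [hfac]; field_simp

end CondIndep

section ProductMarginal

variable {S1 S2 Q W1 W2 : Type} [Fintype S1] [Fintype S2] [Fintype Q]
  {G : (S1 × S2) × Q × (W1 × W2) → ℝ} {a : S1 × W1 → ℝ} {b : S2 × W2 → ℝ}

lemma IsCondIndep.exists_eq_mul_mul (hG : ∀ x, 0 ≤ G x) (h : IsCondIndep G)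
    (hmarg : ∀ s1 s2 w1 w2, ∑ q, G ((s1, s2), q, (w1, w2)) = a (s1, w1) * b (s2, w2)) :
    ∃ g : Q × (W1 × W2) → ℝ, ∀ s1 s2 q w1 w2,
      G ((s1, s2), q, (w1, w2)) = a (s1, w1) * b (s2, w2) * g (q, (w1, w2)) :=
  ⟨fun x => (∑ s, G (s, x.1, x.2)) / ∑ s, ∑ q, G (s, q, x.2),
    fun s1 s2 q w1 w2 => by rw [h.eq_mul_div hG, hmarg]⟩

lemma IsCondIndep.marginal_fst [Fintype W2] (hG : ∀ x, 0 ≤ G x) (h : IsCondIndep G)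
    (hmarg : ∀ s1 s2 w1 w2, ∑ q, G ((s1, s2), q, (w1, w2)) = a (s1, w1) * b (s2, w2)) :
    IsCondIndep (fun x : S1 × Q × W1 => ∑ s2, ∑ w2, G ((x.1, s2), x.2.1, (x.2.2, w2))) := by
  obtain ⟨g, hg⟩ := h.exists_eq_mul_mul hG hmarg
  exact ⟨a, fun x => ∑ s2, ∑ w2, b (s2, w2) * g (x.1, (x.2, w2)),
    fun s1 q w1 => by simp only [hg, mul_sum, mul_assoc]⟩

lemma IsCondIndep.slice_snd [Fintype W1] (hG : ∀ x, 0 ≤ G x) (h : IsCondIndep G)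
    (hmarg : ∀ s1 s2 w1 w2, ∑ q, G ((s1, s2), q, (w1, w2)) = a (s1, w1) * b (s2, w2))
    (s1 : S1) :
    IsCondIndep (fun x : S2 × Q × W2 => ∑ w1, G ((s1, x.1), x.2.1, (w1, x.2.2))) := by
  obtain ⟨g, hg⟩ := h.exists_eq_mul_mul hG hmarg
  exact ⟨b, fun x => ∑ w1, a (s1, w1) * g (x.1, (w1, x.2)),
    fun s2 q w2 => by simp only [hg, mul_sum]; exact sum_congr rfl fun _ _ => by ring⟩

end ProductMarginal

lemma mul_log_div_eq_add {t PS PQ P1 M1 : ℝ} (ht : 0 ≤ t) (htPS : t ≤ PS) (htPQ : t ≤ PQ)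
    (htP1 : t ≤ P1) (hP1M : P1 ≤ M1) :
    t * log (t / (PS * PQ)) = t * log (P1 / (M1 * PQ)) + t * log (t * M1 / (PS * P1)) := by
  rcases ht.eq_or_lt with rfl | ht
  · simp
  have hPS := ht.trans_le htPS
  have hPQ := ht.trans_le htPQ
  have hP1 := ht.trans_le htP1
  have hM1 := hP1.trans_le hP1M
  rw [← mul_add, ← log_mul (by positivity) (by positivity)]
  congr 2
  field_simp

/-- The chain rule `I(A₁A₂; B) = I(A₁; B) + I(A₂; B | A₁)`. -/
lemma mi2_eq_mi2_add_cmi3 {A1 A2 B : Type} [Fintype A1] [Fintype A2] [Fintype B]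
    {P : (A1 × A2) × B → ℝ} (hP : ∀ x, 0 ≤ P x) :
    mi2 P = mi2 (fun x : A1 × B => ∑ a2, P ((x.1, a2), x.2)) +
      cmi3 (fun x : A2 × B × A1 => P ((x.2.2, x.1), x.2.1)) := by
  have hjoint : mi2 P = ∑ a1, ∑ a2, ∑ b, P ((a1, a2), b) *
      log (P ((a1, a2), b) / ((∑ b', P ((a1, a2), b')) * ∑ a1', ∑ a2', P ((a1', a2'), b))) := by
    unfold mi2
    simp only [Fintype.sum_prod_type]
  have hfst : mi2 (fun x : A1 × B => ∑ a2, P ((x.1, a2), x.2)) =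
      ∑ a1, ∑ a2, ∑ b, P ((a1, a2), b) * log ((∑ a2', P ((a1, a2'), b)) /
        ((∑ b', ∑ a2', P ((a1, a2'), b')) * ∑ a1', ∑ a2', P ((a1', a2'), b))) := by
    unfold mi2
    refine sum_congr rfl fun a1 _ => ?_
    simp only [sum_mul]
    exact sum_comm
  have hcond : cmi3 (fun x : A2 × B × A1 => P ((x.2.2, x.1), x.2.1)) = ∑ a1, ∑ a2, ∑ b,
      P ((a1, a2), b) * log ((P ((a1, a2), b) * ∑ b', ∑ a2', P ((a1, a2'), b')) /
        ((∑ b', P ((a1, a2), b')) * ∑ a2', P ((a1, a2'), b))) := by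
    unfold cmi3
    conv_lhs => enter [2, a2]; rw [sum_comm]
    rw [sum_comm]
    simp only [sum_comm (γ := A2) (α := B)]
  rw [hjoint, hfst, hcond, ← sum_add_distrib]
  refine sum_congr rfl fun a1 _ => ?_
  rw [← sum_add_distrib]
  refine sum_congr rfl fun a2 _ => ?_
  rw [← sum_add_distrib]
  refine sum_congr rfl fun b _ => ?_
  exact mul_log_div_eq_add (hP _) (le_sum_snd hP (a1, a2) b)
    (le_sum_sum (p := fun x => P ((x.1, x.2.1), x.2.2)) (fun _ => hP _) a1 a2 b)
    (single_le_sum (f := fun a2' => P ((a1, a2'), b)) (fun _ _ => hP _) (mem_univ a2))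
    (single_le_sum (f := fun b' => ∑ a2', P ((a1, a2'), b'))
      (fun _ _ => sum_nonneg fun _ _ => hP _) (mem_univ b))

lemma exists_pos_sum_mul_le {C : Type} [Fintype C] {w x : C → ℝ} (hw : ∀ c, 0 ≤ w c)
    (hsum : ∑ c, w c = 1) : ∃ c, 0 < w c ∧ ∑ c', w c' * x c' ≤ x c := by
  by_contra! h
  obtain ⟨c0, hc0⟩ : ∃ c, 0 < w c := by
    by_contra! h0
    simp [le_antisymm (h0 _) (hw _)] at hsum
  have hlt : ∑ c, w c * x c < ∑ c, w c * ∑ c', w c' * x c' := by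
    refine sum_lt_sum (fun c _ => ?_) ⟨c0, mem_univ c0, mul_lt_mul_of_pos_left (h c0 hc0) hc0⟩
    rcases (hw c).eq_or_lt with h0 | h0
    · simp [← h0]
    · exact (mul_lt_mul_of_pos_left (h c h0) h0).le
  rw [← sum_mul, hsum, one_mul] at hlt
  exact hlt.false

lemma csSup_le_add_of_forall_le_add {s t u : Set ℝ} (hu : u.Nonempty) (hs : BddAbove s)
    (ht : BddAbove t) (h : ∀ c ∈ u, ∃ a ∈ s, ∃ b ∈ t, c ≤ a + b) : sSup u ≤ sSup s + sSup t :=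
  csSup_le hu fun c hc => by
    obtain ⟨a, ha, b, hb, hle⟩ := h c hc
    exact hle.trans (add_le_add (le_csSup hs ha) (le_csSup ht hb))

open scoped Pointwise in
lemma add_csSup_le_of_forall_add_mem {s t u : Set ℝ} (hs : s.Nonempty) (ht : t.Nonempty)
    (hs' : BddAbove s) (ht' : BddAbove t) (hu : BddAbove u)
    (h : ∀ a ∈ s, ∀ b ∈ t, a + b ∈ u) : sSup s + sSup t ≤ sSup u := by
  rw [← csSup_add hs hs' ht ht']
  exact csSup_le_csSup hu (hs.add ht) (Set.add_subset_iff.2 h)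

/-- The law of `(S, Q, Y)`, ordered as the arguments of `cmi3` for `I(S; Q | Y)`. -/
def lawSQY {S Y Z Q : Type} [Fintype Z] (e : S × Y × Z × Q → ℝ) : S × Q × Y → ℝ :=
  fun x => ∑ z, e (x.1, x.2.2, z, x.2.1)

def lawSQ {S Y Z Q : Type} [Fintype Y] [Fintype Z] (e : S × Y × Z × Q → ℝ) : S × Q → ℝ :=
  fun x => ∑ y, ∑ z, e (x.1, y, z, x.2)

def swapYZExt {S Y Z Q : Type} (e : S × Y × Z × Q → ℝ) : S × Z × Y × Q → ℝ :=
  fun x => e (x.1, x.2.2.1, x.2.1, x.2.2.2)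

/-- `e` is the law of `(S, Y, Z, Q)` for a `Q` admissible in `SI_GH(S; Y, Z)` under `p`. -/
structure IsSIGHExt {S Y Z Q : Type} [Fintype Y] [Fintype Z] [Fintype Q]
    (p : S × Y × Z → ℝ) (e : S × Y × Z × Q → ℝ) : Prop where
  nonneg : ∀ x, 0 ≤ e x
  sum_eq : ∀ s y z, ∑ q, e (s, y, z, q) = p (s, y, z)
  condIndep_Y : IsCondIndep (lawSQY e)
  condIndep_Z : IsCondIndep (lawSQY (swapYZExt e))

def SIGHValues {S Y Z : Type} [Fintype S] [Fintype Y] [Fintype Z] (p : S × Y × Z → ℝ) :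
    Set ℝ :=
  {r | ∃ (Q : Type) (_ : Fintype Q) (e : S × Y × Z × Q → ℝ), IsSIGHExt p e ∧ r = mi2 (lawSQ e)}

section SIGHValues

variable {S Y Z Q : Type} [Fintype Y] [Fintype Z] [Fintype Q]
  {p : S × Y × Z → ℝ} {e : S × Y × Z × Q → ℝ}

lemma IsSIGHExt.swap (he : IsSIGHExt p e) : IsSIGHExt (swapYZ p) (swapYZExt e) :=
  ⟨fun _ => he.nonneg _, fun s z y => he.sum_eq s y z, he.condIndep_Z, he.condIndep_Y⟩

lemma IsSIGHExt.lawSQ_nonneg (he : IsSIGHExt p e) (x : S × Q) : 0 ≤ lawSQ e x :=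
  sum_nonneg fun _ _ => sum_nonneg fun _ _ => he.nonneg _

lemma IsSIGHExt.sum_lawSQ_apply (he : IsSIGHExt p e) (s : S) :
    ∑ q, lawSQ e (s, q) = ∑ y, ∑ z, p (s, y, z) := by
  simp only [lawSQ, sum_comm (γ := Q), he.sum_eq]

variable [Fintype S]

lemma IsSIGHExt.sum_lawSQ (he : IsSIGHExt p e) : ∑ x, lawSQ e x = ∑ x, p x := by
  simp only [Fintype.sum_prod_type, he.sum_lawSQ_apply]

lemma isSIGHExt_iff : IsSIGHExt p e ↔ (∀ x, 0 ≤ e x) ∧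
    (∀ s y z, ∑ q, e (s, y, z, q) = p (s, y, z)) ∧
    cmi3 (lawSQY e) = 0 ∧ cmi3 (lawSQY (swapYZExt e)) = 0 := by
  refine ⟨fun he => ⟨he.nonneg, he.sum_eq, he.condIndep_Y.cmi3_eq_zero,
    he.condIndep_Z.cmi3_eq_zero⟩, fun ⟨hnn, hsum, hY, hZ⟩ => ⟨hnn, hsum, ?_, ?_⟩⟩
  · exact isCondIndep_of_cmi3_eq_zero (fun _ => sum_nonneg fun _ _ => hnn _) hY
  · exact isCondIndep_of_cmi3_eq_zero (fun _ => sum_nonneg fun _ _ => hnn _) hZ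

lemma SIGH_eq_sSup_SIGHValues (p : S × Y × Z → ℝ) : SIGH p = sSup (SIGHValues p) := by
  unfold SIGH SIGHValues
  congr! 3 with r
  simp only [isSIGHExt_iff, and_assoc]
  rfl

lemma SIGHValues_bddAbove (p : S × Y × Z → ℝ) : BddAbove (SIGHValues p) := by
  refine ⟨Fintype.card S, ?_⟩
  rintro r ⟨Q, _, e, he, rfl⟩
  exact mi2_le_card he.lawSQ_nonneg

lemma SIGHValues_nonempty (hp : ∀ x, 0 ≤ p x) : (SIGHValues p).Nonempty := by
  refine ⟨_, PUnit, inferInstance, fun x => p (x.1, x.2.1, x.2.2.1),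
    ⟨fun _ => hp _, fun _ _ _ => by simp, ?_, ?_⟩, rfl⟩
  · exact ⟨fun x => ∑ z, p (x.1, x.2, z), fun _ => 1, fun _ _ _ => (mul_one _).symm⟩
  · exact ⟨fun x => ∑ y, p (x.1, y, x.2), fun _ => 1, fun _ _ _ => (mul_one _).symm⟩

end SIGHValues

def prodExt {S1 Y1 Z1 Q1 S2 Y2 Z2 Q2 : Type} (e1 : S1 × Y1 × Z1 × Q1 → ℝ)
    (e2 : S2 × Y2 × Z2 × Q2 → ℝ) : (S1 × S2) × (Y1 × Y2) × (Z1 × Z2) × (Q1 × Q2) → ℝ :=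
  fun x => e1 (x.1.1, x.2.1.1, x.2.2.1.1, x.2.2.2.1) * e2 (x.1.2, x.2.1.2, x.2.2.1.2, x.2.2.2.2)

section Superadditivity

variable {S1 Y1 Z1 Q1 S2 Y2 Z2 Q2 : Type}
  {e1 : S1 × Y1 × Z1 × Q1 → ℝ} {e2 : S2 × Y2 × Z2 × Q2 → ℝ}

lemma lawSQY_prodExt [Fintype Z1] [Fintype Z2] : lawSQY (prodExt e1 e2) =
    fun x => lawSQY e1 (x.1.1, x.2.1.1, x.2.2.1) * lawSQY e2 (x.1.2, x.2.1.2, x.2.2.2) := by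
  funext x
  simp only [lawSQY, prodExt, Fintype.sum_mul_sum, Fintype.sum_prod_type]

lemma lawSQ_prodExt [Fintype Y1] [Fintype Z1] [Fintype Y2] [Fintype Z2] :
    lawSQ (prodExt e1 e2) = fun x => lawSQ e1 (x.1.1, x.2.1) * lawSQ e2 (x.1.2, x.2.2) := by
  funext x
  simp only [lawSQ, prodExt, Fintype.sum_mul_sum, Fintype.sum_prod_type]

variable [Fintype Y1] [Fintype Z1] [Fintype Q1] [Fintype Y2] [Fintype Z2] [Fintype Q2]
  {p1 : S1 × Y1 × Z1 → ℝ} {p2 : S2 × Y2 × Z2 → ℝ}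

lemma IsSIGHExt.prod (h1 : IsSIGHExt p1 e1) (h2 : IsSIGHExt p2 e2) :
    IsSIGHExt (prodDist p1 p2) (prodExt e1 e2) := by
  refine ⟨fun _ => mul_nonneg (h1.nonneg _) (h2.nonneg _), fun s y z => ?_, ?_, ?_⟩
  · simp only [prodExt, Fintype.sum_prod_type, ← Fintype.sum_mul_sum, h1.sum_eq, h2.sum_eq]
    rfl
  · rw [lawSQY_prodExt]
    exact h1.condIndep_Y.prod h2.condIndep_Y
  · show IsCondIndep (lawSQY (prodExt (swapYZExt e1) (swapYZExt e2)))
    rw [lawSQY_prodExt]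
    exact h1.condIndep_Z.prod h2.condIndep_Z

lemma add_mem_SIGHValues_prodDist [Fintype S1] [Fintype S2] (hp1 : ∑ x, p1 x = 1)
    (hp2 : ∑ x, p2 x = 1) {r1 r2 : ℝ} (h1 : r1 ∈ SIGHValues p1) (h2 : r2 ∈ SIGHValues p2) :
    r1 + r2 ∈ SIGHValues (prodDist p1 p2) := by
  obtain ⟨Q1, _, e1, he1, rfl⟩ := h1
  obtain ⟨Q2, _, e2, he2, rfl⟩ := h2
  refine ⟨Q1 × Q2, inferInstance, prodExt e1 e2, he1.prod he2, ?_⟩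
  rw [lawSQ_prodExt, mi2_prod he1.lawSQ_nonneg he2.lawSQ_nonneg (he1.sum_lawSQ.trans hp1)
    (he2.sum_lawSQ.trans hp2)]

end Superadditivity

def margFst {S1 S2 Y1 Y2 Z1 Z2 Q : Type} [Fintype S2] [Fintype Y2] [Fintype Z2]
    (e : (S1 × S2) × (Y1 × Y2) × (Z1 × Z2) × Q → ℝ) : S1 × Y1 × Z1 × Q → ℝ :=
  fun v => ∑ s2, ∑ y2, ∑ z2, e ((v.1, s2), (v.2.1, y2), (v.2.2.1, z2), v.2.2.2)

noncomputable def condSnd {S1 S2 Y1 Y2 Z1 Z2 Q : Type} [Fintype Y1] [Fintype Z1]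
    (p1 : S1 × Y1 × Z1 → ℝ) (e : (S1 × S2) × (Y1 × Y2) × (Z1 × Z2) × Q → ℝ) (s1 : S1) :
    S2 × Y2 × Z2 × Q → ℝ :=
  fun v => (∑ y1, ∑ z1, e ((s1, v.1), (y1, v.2.1), (z1, v.2.2.1), v.2.2.2)) /
    ∑ y1, ∑ z1, p1 (s1, y1, z1)

section Subadditivity

variable {S1 S2 Y1 Y2 Z1 Z2 Q : Type} {p1 : S1 × Y1 × Z1 → ℝ} {p2 : S2 × Y2 × Z2 → ℝ}
  {e : (S1 × S2) × (Y1 × Y2) × (Z1 × Z2) × Q → ℝ}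

lemma lawSQ_margFst [Fintype S2] [Fintype Y1] [Fintype Y2] [Fintype Z1] [Fintype Z2] :
    lawSQ (margFst e) = fun x => ∑ s2, lawSQ e ((x.1, s2), x.2) := by
  ext x
  simp only [lawSQ, margFst, Fintype.sum_prod_type, sum_comm (γ := S2)]
  simp only [sum_comm (γ := Z1)]

lemma lawSQ_condSnd [Fintype Y1] [Fintype Y2] [Fintype Z1] [Fintype Z2] (s1 : S1) :
    lawSQ (condSnd p1 e s1) =
      fun x => lawSQ e ((s1, x.1), x.2) / ∑ y1, ∑ z1, p1 (s1, y1, z1) := by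
  ext x
  simp only [lawSQ, condSnd, ← sum_div, Fintype.sum_prod_type, sum_comm (γ := Y1)]
  simp only [sum_comm (γ := Z1)]

variable [Fintype Y1] [Fintype Y2] [Fintype Z1] [Fintype Z2] [Fintype Q]

lemma IsSIGHExt.sum_lawSQY_prodDist (he : IsSIGHExt (prodDist p1 p2) e) (s1 : S1) (s2 : S2)
    (y1 : Y1) (y2 : Y2) :
    ∑ q, lawSQY e ((s1, s2), q, (y1, y2)) = (∑ z1, p1 (s1, y1, z1)) * ∑ z2, p2 (s2, y2, z2) := by
  unfold lawSQY
  rw [sum_comm]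
  simp only [he.sum_eq, prodDist, Fintype.sum_prod_type, Fintype.sum_mul_sum]

variable [Fintype S1] [Fintype S2]

lemma IsSIGHExt.isCondIndep_lawSQY_margFst (he : IsSIGHExt (prodDist p1 p2) e) :
    IsCondIndep (lawSQY (margFst e)) := by
  have := he.condIndep_Y.marginal_fst (G := lawSQY e) (a := fun x => ∑ z1, p1 (x.1, x.2, z1))
    (b := fun x => ∑ z2, p2 (x.1, x.2, z2)) (fun _ => sum_nonneg fun _ _ => he.nonneg _)
    he.sum_lawSQY_prodDist
  convert this using 2 with x
  simp only [lawSQY, margFst, Fintype.sum_prod_type, sum_comm (γ := Z1)]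

lemma IsSIGHExt.isCondIndep_lawSQY_condSnd (he : IsSIGHExt (prodDist p1 p2) e) (s1 : S1) :
    IsCondIndep (lawSQY (condSnd p1 e s1)) := by
  have := (he.condIndep_Y.slice_snd (G := lawSQY e) (a := fun x => ∑ z1, p1 (x.1, x.2, z1))
    (b := fun x => ∑ z2, p2 (x.1, x.2, z2)) (fun _ => sum_nonneg fun _ _ => he.nonneg _)
    he.sum_lawSQY_prodDist s1).div_const (∑ y1, ∑ z1, p1 (s1, y1, z1))
  convert this using 2 with x
  simp only [lawSQY, condSnd, ← sum_div, Fintype.sum_prod_type, sum_comm (γ := Z2)]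

lemma IsSIGHExt.marg_fst (he : IsSIGHExt (prodDist p1 p2) e) (hp2 : ∑ x, p2 x = 1) :
    IsSIGHExt p1 (margFst e) := by
  have hswap : IsSIGHExt (prodDist (swapYZ p1) (swapYZ p2)) (swapYZExt e) := he.swap
  refine ⟨fun _ => sum_nonneg fun _ _ => sum_nonneg fun _ _ => sum_nonneg fun _ _ => he.nonneg _,
    fun s1 y1 z1 => ?_, he.isCondIndep_lawSQY_margFst, ?_⟩
  · simp only [margFst, sum_comm (γ := Q), he.sum_eq, prodDist, ← mul_sum]
    simp only [Fintype.sum_prod_type] at hp2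
    rw [hp2, mul_one]
  · convert hswap.isCondIndep_lawSQY_margFst using 2
    ext x
    simp only [swapYZExt, margFst, sum_comm (γ := Y2)]

lemma IsSIGHExt.cond_snd (he : IsSIGHExt (prodDist p1 p2) e) {s1 : S1}
    (hs1 : 0 < ∑ y1, ∑ z1, p1 (s1, y1, z1)) : IsSIGHExt p2 (condSnd p1 e s1) := by
  have hswap : IsSIGHExt (prodDist (swapYZ p1) (swapYZ p2)) (swapYZExt e) := he.swap
  refine ⟨fun _ => div_nonneg (sum_nonneg fun _ _ => sum_nonneg fun _ _ => he.nonneg _) hs1.le,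
    fun s2 y2 z2 => ?_, he.isCondIndep_lawSQY_condSnd s1, ?_⟩
  · simp only [condSnd, ← sum_div, sum_comm (γ := Q), he.sum_eq, prodDist, ← sum_mul]
    exact mul_div_cancel_left₀ _ hs1.ne'
  · convert hswap.isCondIndep_lawSQY_condSnd s1 using 2
    ext x
    simp only [swapYZExt, condSnd, swapYZ, sum_comm (γ := Y1)]

lemma IsSIGHExt.exists_mi2_le_add (he : IsSIGHExt (prodDist p1 p2) e) (hp1 : IsProbDist p1)
    (hp2 : ∑ x, p2 x = 1) : ∃ s1, 0 < ∑ y1, ∑ z1, p1 (s1, y1, z1) ∧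
      mi2 (lawSQ e) ≤ mi2 (lawSQ (margFst e)) + mi2 (lawSQ (condSnd p1 e s1)) := by
  have hweight : ∀ s1, ∑ s2, ∑ q, lawSQ e ((s1, s2), q) = ∑ y1, ∑ z1, p1 (s1, y1, z1) :=
    fun s1 => by rw [sum_comm, ← (he.marg_fst hp2).sum_lawSQ_apply, lawSQ_margFst]
  obtain ⟨s1, hpos, hle⟩ := exists_pos_sum_mul_le (w := fun s1 => ∑ y1, ∑ z1, p1 (s1, y1, z1))
    (x := fun s1 => mi2 (lawSQ (condSnd p1 e s1)))
    (fun _ => sum_nonneg fun _ _ => sum_nonneg fun _ _ => hp1.1 _)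
    (by simpa only [Fintype.sum_prod_type] using hp1.2)
  refine ⟨s1, hpos, ?_⟩
  rw [mi2_eq_mi2_add_cmi3 he.lawSQ_nonneg, cmi3_eq_sum_mul_mi2 (fun _ => he.lawSQ_nonneg _),
    lawSQ_margFst]
  simp only [hweight, lawSQ_condSnd] at hle ⊢
  exact add_le_add le_rfl hle

lemma exists_le_add_of_mem_SIGHValues_prodDist (hp1 : IsProbDist p1) (hp2 : IsProbDist p2)
    {r : ℝ} (hr : r ∈ SIGHValues (prodDist p1 p2)) :
    ∃ r1 ∈ SIGHValues p1, ∃ r2 ∈ SIGHValues p2, r ≤ r1 + r2 := by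
  obtain ⟨Q, _, e, he, rfl⟩ := hr
  obtain ⟨s1, hs1, hle⟩ := he.exists_mi2_le_add hp1 hp2.2
  exact ⟨_, ⟨Q, _, _, he.marg_fst hp2.2, rfl⟩, _, ⟨Q, _, _, he.cond_snd hs1, rfl⟩, hle⟩

end Subadditivity

section Additivity

variable {S1 Y1 Z1 S2 Y2 Z2 : Type} [Fintype S1] [Fintype Y1] [Fintype Z1]
  [Fintype S2] [Fintype Y2] [Fintype Z2] {p1 : S1 × Y1 × Z1 → ℝ} {p2 : S2 × Y2 × Z2 → ℝ}

lemma SIGH_prodDist_le (hp1 : IsProbDist p1) (hp2 : IsProbDist p2) :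
    SIGH (prodDist p1 p2) ≤ SIGH p1 + SIGH p2 := by
  simp only [SIGH_eq_sSup_SIGHValues]
  exact csSup_le_add_of_forall_le_add
    (SIGHValues_nonempty fun _ => mul_nonneg (hp1.1 _) (hp2.1 _)) (SIGHValues_bddAbove p1)
    (SIGHValues_bddAbove p2) fun _ hr => exists_le_add_of_mem_SIGHValues_prodDist hp1 hp2 hr

lemma le_SIGH_prodDist (hp1 : IsProbDist p1) (hp2 : IsProbDist p2) :
    SIGH p1 + SIGH p2 ≤ SIGH (prodDist p1 p2) := by
  simp only [SIGH_eq_sSup_SIGHValues]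
  exact add_csSup_le_of_forall_add_mem (SIGHValues_nonempty hp1.1) (SIGHValues_nonempty hp2.1)
    (SIGHValues_bddAbove p1) (SIGHValues_bddAbove p2) (SIGHValues_bddAbove _)
    fun _ h1 _ h2 => add_mem_SIGHValues_prodDist hp1.2 hp2.2 h1 h2

end Additivity

/-- `SI_GH` is subadditive under independent combination, and hence (together
with superadditivity) additive. -/
theorem SIGH_subadditive_and_additive
    {S1 Y1 Z1 S2 Y2 Z2 : Type} [Fintype S1] [Fintype Y1] [Fintype Z1]
    [Fintype S2] [Fintype Y2] [Fintype Z2]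
    (p1 : S1 × Y1 × Z1 → ℝ) (p2 : S2 × Y2 × Z2 → ℝ)
    (hp1 : IsProbDist p1) (hp2 : IsProbDist p2) :
    SIGH (prodDist p1 p2) ≤ SIGH p1 + SIGH p2 ∧
    SIGH (prodDist p1 p2) = SIGH p1 + SIGH p2 :=
  ⟨SIGH_prodDist_le hp1 hp2, (SIGH_prodDist_le hp1 hp2).antisymm (le_SIGH_prodDist hp1 hp2)⟩
end

section
/- Shannon entropy is asymptotically continuous: for probability distributions P, P' on a finite set S, if (1/2)‖P − P'‖₁ ≤ ε ≤ 1, then |H(P) − H(P')| ≤ ε·log|S| + h(ε), where h is the binary entropy function. -/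
open scoped BigOperators

/-- Shannon entropy of a distribution on a finite type. -/
noncomputable def ent {A : Type} [Fintype A] (p : A → ℝ) : ℝ :=
  ∑ a, Real.negMulLog (p a)

/-- The binary entropy function `h(ε) = −ε log ε − (1−ε) log (1−ε)`. -/
noncomputable def binEnt (ε : ℝ) : ℝ :=
  Real.negMulLog ε + Real.negMulLog (1 - ε)

/-!
The common part `min(p, p')` has mass `1 - t ≥ 1 - ε`, where `t` is the total variation
distance, so `p = (1 - ε) w + ε u` and `p' = (1 - ε) w + ε v` for distributions `w, u, v`.
Subadditivity of `η(x) = -x log x` gives `H(p) ≤ (1 - ε) H(w) + ε H(u) + h(ε)`, concavity of `η`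
gives `H(p') ≥ (1 - ε) H(w) + ε H(v)`, and `0 ≤ H ≤ log |S|` bounds `ε (H(u) - H(v))`.
The endpoints `ε = 0` (then `p = p'`) and `ε = 1` (the trivial bound) are treated apart.
-/

open Real Finset

section Entropy

variable {A : Type} [Fintype A]

theorem Real.negMulLog_add_le {x y : ℝ} (hx : 0 ≤ x) (hy : 0 ≤ y) :
    negMulLog (x + y) ≤ negMulLog x + negMulLog y := by
  rcases hx.eq_or_lt with rfl | hx
  · simp
  rcases hy.eq_or_lt with rfl | hy
  · simp
  have hlx : log x ≤ log (x + y) := log_le_log hx (by linarith)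
  have hly : log y ≤ log (x + y) := log_le_log hy (by linarith)
  simp only [negMulLog, neg_mul]
  nlinarith

theorem IsProbDist.le_one {p : A → ℝ} (hp : IsProbDist p) (a : A) : p a ≤ 1 :=
  hp.2 ▸ single_le_sum (fun i _ => hp.1 i) (mem_univ a)

theorem IsProbDist.nonempty {p : A → ℝ} (hp : IsProbDist p) : Nonempty A := by
  by_contra h
  simpa [not_nonempty_iff.mp h] using hp.2

theorem ent_nonneg {p : A → ℝ} (hp : IsProbDist p) : 0 ≤ ent p :=
  sum_nonneg fun a _ => negMulLog_nonneg (hp.1 a) (hp.le_one a)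

theorem ent_le_log_card {p : A → ℝ} (hp : IsProbDist p) : ent p ≤ log (Fintype.card A) := by
  have := hp.nonempty
  set d : ℝ := (Fintype.card A : ℝ)
  have hd : 0 < d := Nat.cast_pos.mpr Fintype.card_pos
  have jensen := concaveOn_negMulLog.le_map_sum (t := univ) (w := fun _ => d⁻¹) (p := p)
    (fun _ _ => by positivity) (by simp [d, card_univ]) (fun a _ => hp.1 a)
  have hrhs : negMulLog d⁻¹ = d⁻¹ * log d := by simp [negMulLog, log_inv]
  simp only [smul_eq_mul, ← mul_sum, hp.2, mul_one, hrhs] at jensen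
  exact le_of_mul_le_mul_left jensen (inv_pos.2 hd)

theorem abs_ent_sub_le_log_card {p p' : A → ℝ} (hp : IsProbDist p) (hp' : IsProbDist p') :
    |ent p - ent p'| ≤ log (Fintype.card A) := by
  rw [abs_sub_le_iff]
  constructor <;> linarith [ent_le_log_card hp, ent_le_log_card hp', ent_nonneg hp, ent_nonneg hp']

theorem ent_mix_le {w u : A → ℝ} (hw : IsProbDist w) (hu : IsProbDist u) {t : ℝ}
    (ht0 : 0 ≤ t) (ht1 : t ≤ 1) :
    ent (fun a => (1 - t) * w a + t * u a) ≤ (1 - t) * ent w + t * ent u + binEnt t := by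
  calc ent (fun a => (1 - t) * w a + t * u a)
      ≤ ∑ a, (negMulLog ((1 - t) * w a) + negMulLog (t * u a)) :=
        sum_le_sum fun a _ => negMulLog_add_le (mul_nonneg (by linarith) (hw.1 a))
          (mul_nonneg ht0 (hu.1 a))
    _ = (1 - t) * ent w + t * ent u + binEnt t := by
        simp only [negMulLog_mul, sum_add_distrib, ← mul_sum, ← sum_mul, hw.2, hu.2, ent, binEnt]
        ring

theorem le_ent_mix {w v : A → ℝ} (hw : ∀ a, 0 ≤ w a) (hv : ∀ a, 0 ≤ v a) {t : ℝ}
    (ht0 : 0 ≤ t) (ht1 : t ≤ 1) :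
    (1 - t) * ent w + t * ent v ≤ ent (fun a => (1 - t) * w a + t * v a) := by
  simp only [ent, mul_sum, ← sum_add_distrib]
  exact sum_le_sum fun a _ => concaveOn_negMulLog.2 (hw a) (hv a) (by linarith) ht0 (by ring)

theorem sum_min_eq_one_sub_tv {p p' : A → ℝ} (hp : IsProbDist p) (hp' : IsProbDist p') :
    ∑ a, min (p a) (p' a) = 1 - (1 / 2) * ∑ a, |p a - p' a| := by
  have h a : min (p a) (p' a) = (p a + p' a - |p a - p' a|) / 2 := by
    linarith [min_add_max (p a) (p' a), max_sub_min_eq_abs' (p a) (p' a)]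
  simp only [h, ← sum_div, sum_sub_distrib, sum_add_distrib, hp.2, hp'.2]
  ring

theorem exists_mix_decomposition {p p' : A → ℝ} (hp : IsProbDist p) (hp' : IsProbDist p') {ε : ℝ}
    (hε : (1 / 2) * ∑ a, |p a - p' a| ≤ ε) (hε0 : 0 < ε) (hε1 : ε < 1) :
    ∃ w u v : A → ℝ, IsProbDist w ∧ IsProbDist u ∧ IsProbDist v ∧
      p = (fun a => (1 - ε) * w a + ε * u a) ∧ p' = (fun a => (1 - ε) * w a + ε * v a) := by
  set m : A → ℝ := fun a => min (p a) (p' a)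
  have hm : ∑ a, m a = 1 - (1 / 2) * ∑ a, |p a - p' a| := sum_min_eq_one_sub_tv hp hp'
  have hm0 : 0 < ∑ a, m a := by linarith
  set w : A → ℝ := fun a => m a / ∑ a, m a
  have hw : IsProbDist w :=
    ⟨fun a => div_nonneg (le_min (hp.1 a) (hp'.1 a)) hm0.le, by simp [w, ← sum_div, hm0.ne']⟩
  have hwm a : (1 - ε) * w a ≤ m a := by
    have : 1 - ε ≤ ∑ a, m a := by linarith
    calc (1 - ε) * w a ≤ (∑ a, m a) * w a := mul_le_mul_of_nonneg_right this (hw.1 a)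
      _ = m a := mul_div_cancel₀ _ hm0.ne'
  have hsplit {q : A → ℝ} (hq : IsProbDist q) (hmq : ∀ a, m a ≤ q a) :
      IsProbDist (fun a => (q a - (1 - ε) * w a) / ε) ∧
        q = fun a => (1 - ε) * w a + ε * ((q a - (1 - ε) * w a) / ε) := by
    refine ⟨⟨fun a => div_nonneg (by linarith [hwm a, hmq a]) hε0.le, ?_⟩, ?_⟩
    · rw [← sum_div, sum_sub_distrib, ← mul_sum, hq.2, hw.2]
      field_simp
      ring
    · funext a
      field_simp
      ring
  obtain ⟨hu, hpu⟩ := hsplit hp fun a => min_le_left _ _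
  obtain ⟨hv, hpv⟩ := hsplit hp' fun a => min_le_right _ _
  exact ⟨w, _, _, hw, hu, hv, hpu, hpv⟩

theorem ent_sub_le_of_tv_le {p p' : A → ℝ} (hp : IsProbDist p) (hp' : IsProbDist p') {ε : ℝ}
    (hε : (1 / 2) * ∑ a, |p a - p' a| ≤ ε) (hε0 : 0 < ε) (hε1 : ε < 1) :
    ent p - ent p' ≤ ε * log (Fintype.card A) + binEnt ε := by
  obtain ⟨w, u, v, hw, hu, hv, rfl, rfl⟩ := exists_mix_decomposition hp hp' hε hε0 hε1
  have hup := ent_mix_le hw hu hε0.le hε1.le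
  have hdown := le_ent_mix hw.1 hv.1 hε0.le hε1.le
  have hu_le : ε * ent u ≤ ε * log (Fintype.card A) :=
    mul_le_mul_of_nonneg_left (ent_le_log_card hu) hε0.le
  have hv_nonneg : 0 ≤ ε * ent v := mul_nonneg hε0.le (ent_nonneg hv)
  linarith

end Entropy

theorem entropy_asymptotically_continuous_general
    {A : Type} [Fintype A]
    (p p' : A → ℝ) (hp : IsProbDist p) (hp' : IsProbDist p')
    (ε : ℝ) (hε1 : (1 / 2) * ∑ a, |p a - p' a| ≤ ε) (hε2 : ε ≤ 1) :
    |ent p - ent p'| ≤ ε * Real.log (Fintype.card A) + binEnt ε := by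
  have htv : 0 ≤ (1 / 2) * ∑ a, |p a - p' a| := by positivity
  rcases hε2.eq_or_lt with rfl | hε_lt
  · simpa [binEnt] using abs_ent_sub_le_log_card hp hp'
  rcases (htv.trans hε1).eq_or_lt with rfl | hε_pos
  · have hpp : p = p' := by
      funext a
      have := (sum_eq_zero_iff_of_nonneg fun a _ => abs_nonneg (p a - p' a)).mp
        (by linarith) a (mem_univ a)
      exact sub_eq_zero.mp (abs_eq_zero.mp this)
    simp [hpp, binEnt]
  have hε1' : (1 / 2) * ∑ a, |p' a - p a| ≤ ε := by simpa only [abs_sub_comm] using hε1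
  rw [abs_sub_le_iff]
  exact ⟨ent_sub_le_of_tv_le hp hp' hε1 hε_pos hε_lt, ent_sub_le_of_tv_le hp' hp hε1' hε_pos hε_lt⟩

/-- Shannon entropy is asymptotically continuous: if `(1/2)‖P − P'‖₁ ≤ ε ≤ 1`
then `|H(P) − H(P')| ≤ ε log |S| + h(ε)`. -/
theorem entropy_asymptotically_continuous
    {A : Type} [Fintype A] (hA : 2 ≤ Fintype.card A)
    (p p' : A → ℝ) (hp : IsProbDist p) (hp' : IsProbDist p')
    (ε : ℝ) (hε1 : (1 / 2) * ∑ a, |p a - p' a| ≤ ε) (hε2 : ε ≤ 1) :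
    |ent p - ent p'| ≤ ε * Real.log (Fintype.card A) + binEnt ε :=
  entropy_asymptotically_continuous_general p p' hp hp' ε hε1 hε2
end

section
/- In the UI construction, UI_δ is the smallest unique-information function dominating δ: if (SI, CI, UI) is any bivariate information decomposition with UI(S;Y\Z) ≥ δ(S;Y\Z) and UI(S;Z\Y) ≥ δ(S;Z\Y), then UI(S;Y\Z) ≥ UI_δ(S;Y\Z) := max{δ(S;Y\Z), δ(S;Z\Y) + I(S;Y) − I(S;Z)}. -/
open scoped BigOperators

/-- `UI_δ` is the smallest unique-information function dominating `δ`: any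
bivariate information decomposition whose unique informations dominate `δ`
satisfies `UI(S;Y\Z) ≥ max {δ(S;Y\Z), δ(S;Z\Y) + I(S;Y) − I(S;Z)}`. -/
theorem UId_minimal
    {S Y Z : Type} [Fintype S] [Fintype Y] [Fintype Z]
    (p : S × Y × Z → ℝ) (hp : IsProbDist p)
    (δY δZ : ℝ) (hδY0 : 0 ≤ δY) (hδZ0 : 0 ≤ δZ)
    (hδY : δY ≤ min (ISY p) (ISYgZ p)) (hδZ : δZ ≤ min (ISZ p) (ISZgY p))
    (SI CI UIY UIZ : ℝ)
    (h1 : ISYZ p = SI + CI + UIY + UIZ)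
    (h2 : ISY p = SI + UIY)
    (h3 : ISZ p = SI + UIZ)
    (hY : δY ≤ UIY) (hZ : δZ ≤ UIZ) :
    max δY (δZ + ISY p - ISZ p) ≤ UIY := by
  apply max_le hY; linarith
end

section
/- For a joint distribution P of finite random variables (S,Y,Z) with full support, the information-geometric family P^(t)(s,y,z) = (1/c_t)·P(y,z)·P(s|y)^t·P(s|z)^(1−t) is multiplicative under independent combination: if P is the product of P1 (on S1,Y1,Z1) and P2 (on S2,Y2,Z2), then P^(t) = P1^(t) ⊗ P2^(t), and consequently D(P‖P^(t)) = D(P1‖P1^(t)) + D(P2‖P2^(t)). Hence CI_IG(S1S2;Y1Y2,Z1Z2) = min_t D(P‖P^(t)) ≥ min_t D(P1‖P1^(t)) + min_t D(P2‖P2^(t)) = CI_IG(S1;Y1,Z1) + CI_IG(S2;Y2,Z2), i.e., CI_IG is superadditive (equivalently SI_IG is superadditive in the decomposition). -/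
open scoped BigOperators

/-- Marginal distribution of `(Y,Z)`. -/
noncomputable def margYZ {S Y Z : Type} [Fintype S] [Fintype Y] [Fintype Z]
    (p : S × Y × Z → ℝ) : Y × Z → ℝ := fun x => ∑ s, p (s, x.1, x.2)

/-- Conditional probability `P(s|y)`. -/
noncomputable def condSY {S Y Z : Type} [Fintype S] [Fintype Y] [Fintype Z]
    (p : S × Y × Z → ℝ) (s : S) (y : Y) : ℝ :=
  margSY p (s, y) / ∑ s', margSY p (s', y)

/-- Conditional probability `P(s|z)`. -/
noncomputable def condSZ {S Y Z : Type} [Fintype S] [Fintype Y] [Fintype Z]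
    (p : S × Y × Z → ℝ) (s : S) (z : Z) : ℝ :=
  margSZ p (s, z) / ∑ s', margSZ p (s', z)

/-- The unnormalized member of the information-geometric family:
`P(y,z) P(s|y)^t P(s|z)^(1−t)`. -/
noncomputable def IGnum {S Y Z : Type} [Fintype S] [Fintype Y] [Fintype Z]
    (p : S × Y × Z → ℝ) (t : ℝ) : S × Y × Z → ℝ :=
  fun x => margYZ p (x.2.1, x.2.2) * condSY p x.1 x.2.1 ^ t * condSZ p x.1 x.2.2 ^ (1 - t)

/-- The normalizing constant `c_t`. -/
noncomputable def IGc {S Y Z : Type} [Fintype S] [Fintype Y] [Fintype Z]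
    (p : S × Y × Z → ℝ) (t : ℝ) : ℝ := ∑ x, IGnum p t x

/-- The information-geometric family `P^(t) = (1/c_t) P(y,z) P(s|y)^t P(s|z)^(1−t)`. -/
noncomputable def Pt {S Y Z : Type} [Fintype S] [Fintype Y] [Fintype Z]
    (p : S × Y × Z → ℝ) (t : ℝ) : S × Y × Z → ℝ :=
  fun x => IGnum p t x / IGc p t

/-- Kullback–Leibler divergence on a finite type. -/
noncomputable def KL {A : Type} [Fintype A] (p q : A → ℝ) : ℝ :=
  ∑ a, p a * Real.log (p a / q a)

/-- `CI_IG(S;Y,Z) = min_t D(P‖P^(t))`. -/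
noncomputable def CIIG {S Y Z : Type} [Fintype S] [Fintype Y] [Fintype Z]
    (p : S × Y × Z → ℝ) : ℝ := ⨅ t : ℝ, KL p (Pt p t)

section AuxIG

private lemma sum_prod_fst_snd {A B : Type} [Fintype A] [Fintype B] (f : A → ℝ) (g : B → ℝ) :
    ∑ x : A × B, f x.1 * g x.2 = (∑ a, f a) * (∑ b, g b) := by
  rw [Finset.sum_mul_sum, Fintype.sum_prod_type]

/-- The regrouping equivalence. -/
private def eProd {S1 Y1 Z1 S2 Y2 Z2 : Type} :
    ((S1 × S2) × (Y1 × Y2) × (Z1 × Z2)) ≃ ((S1 × Y1 × Z1) × (S2 × Y2 × Z2)) where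
  toFun x := ((x.1.1, x.2.1.1, x.2.2.1), (x.1.2, x.2.1.2, x.2.2.2))
  invFun y := ((y.1.1, y.2.1), (y.1.2.1, y.2.2.1), (y.1.2.2, y.2.2.2))
  left_inv _ := rfl
  right_inv _ := rfl

private lemma sum_prodDist_split {S1 Y1 Z1 S2 Y2 Z2 : Type}
    [Fintype S1] [Fintype Y1] [Fintype Z1] [Fintype S2] [Fintype Y2] [Fintype Z2]
    (f : (S1 × Y1 × Z1) → ℝ) (g : (S2 × Y2 × Z2) → ℝ) :
    ∑ x : (S1 × S2) × (Y1 × Y2) × (Z1 × Z2),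
      f (x.1.1, x.2.1.1, x.2.2.1) * g (x.1.2, x.2.1.2, x.2.2.2)
      = (∑ a, f a) * (∑ b, g b) := by
  rw [← sum_prod_fst_snd f g]
  exact Fintype.sum_equiv eProd _ _ (fun x => rfl)

private lemma KL_nonneg {A : Type} [Fintype A] (p q : A → ℝ)
    (hp : ∀ a, 0 < p a) (hq : ∀ a, 0 < q a) (hsp : ∑ a, p a = 1) (hsq : ∑ a, q a = 1) :
    0 ≤ KL p q := by
  have h : ∀ a : A, p a - q a ≤ p a * Real.log (p a / q a) := by
    intro a
    have h1 : Real.log (q a / p a) ≤ q a / p a - 1 :=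
      Real.log_le_sub_one_of_pos (div_pos (hq a) (hp a))
    have h2 : Real.log (p a / q a) = - Real.log (q a / p a) := by
      rw [← Real.log_inv, inv_div]
    rw [h2]
    have := mul_le_mul_of_nonneg_left h1 (le_of_lt (hp a))
    have hpa := (hp a).ne'
    nlinarith [this, mul_div_cancel₀ (q a) hpa]
  unfold KL
  calc (0:ℝ) = ∑ a, (p a - q a) := by rw [Finset.sum_sub_distrib, hsp, hsq]; ring
    _ ≤ ∑ a, p a * Real.log (p a / q a) := Finset.sum_le_sum (fun a _ => h a)

private lemma KL_prodfun {A B : Type} [Fintype A] [Fintype B]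
    (f1 g1 : A → ℝ) (f2 g2 : B → ℝ)
    (hf1 : ∀ a, 0 < f1 a) (hf2 : ∀ b, 0 < f2 b)
    (hg1 : ∀ a, 0 < g1 a) (hg2 : ∀ b, 0 < g2 b)
    (hs1 : ∑ a, f1 a = 1) (hs2 : ∑ b, f2 b = 1) :
    KL (fun x : A × B => f1 x.1 * f2 x.2) (fun x => g1 x.1 * g2 x.2)
      = KL f1 g1 + KL f2 g2 := by
  unfold KL
  rw [Fintype.sum_prod_type]
  have key : ∀ a b, f1 a * f2 b * Real.log (f1 a * f2 b / (g1 a * g2 b))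
      = (f1 a * Real.log (f1 a / g1 a)) * f2 b + f1 a * (f2 b * Real.log (f2 b / g2 b)) := by
    intro a b
    rw [div_mul_div_comm (f1 a) (g1 a) (f2 b) (g2 b) |>.symm,
      Real.log_mul (div_pos (hf1 a) (hg1 a)).ne' (div_pos (hf2 b) (hg2 b)).ne']
    ring
  calc ∑ a, ∑ b, f1 a * f2 b * Real.log (f1 a * f2 b / (g1 a * g2 b))
      = ∑ a, ∑ b, ((f1 a * Real.log (f1 a / g1 a)) * f2 b
          + f1 a * (f2 b * Real.log (f2 b / g2 b))) := by
        exact Finset.sum_congr rfl fun a _ => Finset.sum_congr rfl fun b _ => key a b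
    _ = ∑ a, ((f1 a * Real.log (f1 a / g1 a)) * ∑ b, f2 b
          + f1 a * ∑ b, (f2 b * Real.log (f2 b / g2 b))) := by
        refine Finset.sum_congr rfl fun a _ => ?_
        rw [Finset.sum_add_distrib, ← Finset.mul_sum, ← Finset.mul_sum]
    _ = KL f1 g1 + KL f2 g2 := by
        simp only [hs2, mul_one, one_mul, Finset.sum_add_distrib, ← Finset.sum_mul, hs1, KL]

end AuxIG

/-- For full-support product distributions, the information-geometric family is
multiplicative, the divergences are additive, and hence `CI_IG` is superadditive. -/
theorem IG_family_multiplicative_and_CIIG_superadditive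
    {S1 Y1 Z1 S2 Y2 Z2 : Type} [Fintype S1] [Fintype Y1] [Fintype Z1]
    [Fintype S2] [Fintype Y2] [Fintype Z2]
    (p1 : S1 × Y1 × Z1 → ℝ) (p2 : S2 × Y2 × Z2 → ℝ)
    (hp1 : IsProbDist p1) (hp2 : IsProbDist p2)
    (hfull1 : ∀ x, 0 < p1 x) (hfull2 : ∀ x, 0 < p2 x) :
    (∀ t : ℝ, Pt (prodDist p1 p2) t = prodDist (Pt p1 t) (Pt p2 t)) ∧
    (∀ t : ℝ, KL (prodDist p1 p2) (Pt (prodDist p1 p2) t)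
        = KL p1 (Pt p1 t) + KL p2 (Pt p2 t)) ∧
    CIIG p1 + CIIG p2 ≤ CIIG (prodDist p1 p2) := by
  obtain ⟨hp1n, hp1s⟩ := hp1
  obtain ⟨hp2n, hp2s⟩ := hp2
  -- nonemptiness
  have hne1 : Nonempty (S1 × Y1 × Z1) := by
    by_contra h
    rw [not_nonempty_iff] at h
    simp at hp1s
  have hne2 : Nonempty (S2 × Y2 × Z2) := by
    by_contra h
    rw [not_nonempty_iff] at h
    simp at hp2s
  obtain ⟨⟨s1, y1, z1⟩⟩ := hne1
  obtain ⟨⟨s2, y2, z2⟩⟩ := hne2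
  haveI : Nonempty S1 := ⟨s1⟩; haveI : Nonempty Y1 := ⟨y1⟩; haveI : Nonempty Z1 := ⟨z1⟩
  haveI : Nonempty S2 := ⟨s2⟩; haveI : Nonempty Y2 := ⟨y2⟩; haveI : Nonempty Z2 := ⟨z2⟩
  -- positivity for p1
  have hmYZ1 : ∀ x : Y1 × Z1, 0 < margYZ p1 x :=
    fun x => Finset.sum_pos (fun s _ => hfull1 _) Finset.univ_nonempty
  have hmSY1 : ∀ x : S1 × Y1, 0 < margSY p1 x :=
    fun x => Finset.sum_pos (fun z _ => hfull1 _) Finset.univ_nonempty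
  have hmSZ1 : ∀ x : S1 × Z1, 0 < margSZ p1 x :=
    fun x => Finset.sum_pos (fun y _ => hfull1 _) Finset.univ_nonempty
  have hcSY1 : ∀ s y, 0 < condSY p1 s y := fun s y =>
    div_pos (hmSY1 _) (Finset.sum_pos (fun s' _ => hmSY1 _) Finset.univ_nonempty)
  have hcSZ1 : ∀ s z, 0 < condSZ p1 s z := fun s z =>
    div_pos (hmSZ1 _) (Finset.sum_pos (fun s' _ => hmSZ1 _) Finset.univ_nonempty)
  have hIGnum1 : ∀ t x, 0 < IGnum p1 t x := fun t x =>
    mul_pos (mul_pos (hmYZ1 _) (Real.rpow_pos_of_pos (hcSY1 _ _) _))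
      (Real.rpow_pos_of_pos (hcSZ1 _ _) _)
  have hIGc1 : ∀ t, 0 < IGc p1 t := fun t =>
    Finset.sum_pos (fun x _ => hIGnum1 t x) Finset.univ_nonempty
  have hPt1 : ∀ t x, 0 < Pt p1 t x := fun t x => div_pos (hIGnum1 t x) (hIGc1 t)
  have hPt1sum : ∀ t, ∑ x, Pt p1 t x = 1 := by
    intro t
    unfold Pt
    rw [← Finset.sum_div]
    exact div_self (hIGc1 t).ne'
  -- positivity for p2
  have hmYZ2 : ∀ x : Y2 × Z2, 0 < margYZ p2 x :=
    fun x => Finset.sum_pos (fun s _ => hfull2 _) Finset.univ_nonempty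
  have hmSY2 : ∀ x : S2 × Y2, 0 < margSY p2 x :=
    fun x => Finset.sum_pos (fun z _ => hfull2 _) Finset.univ_nonempty
  have hmSZ2 : ∀ x : S2 × Z2, 0 < margSZ p2 x :=
    fun x => Finset.sum_pos (fun y _ => hfull2 _) Finset.univ_nonempty
  have hcSY2 : ∀ s y, 0 < condSY p2 s y := fun s y =>
    div_pos (hmSY2 _) (Finset.sum_pos (fun s' _ => hmSY2 _) Finset.univ_nonempty)
  have hcSZ2 : ∀ s z, 0 < condSZ p2 s z := fun s z =>
    div_pos (hmSZ2 _) (Finset.sum_pos (fun s' _ => hmSZ2 _) Finset.univ_nonempty)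
  have hIGnum2 : ∀ t x, 0 < IGnum p2 t x := fun t x =>
    mul_pos (mul_pos (hmYZ2 _) (Real.rpow_pos_of_pos (hcSY2 _ _) _))
      (Real.rpow_pos_of_pos (hcSZ2 _ _) _)
  have hIGc2 : ∀ t, 0 < IGc p2 t := fun t =>
    Finset.sum_pos (fun x _ => hIGnum2 t x) Finset.univ_nonempty
  have hPt2 : ∀ t x, 0 < Pt p2 t x := fun t x => div_pos (hIGnum2 t x) (hIGc2 t)
  have hPt2sum : ∀ t, ∑ x, Pt p2 t x = 1 := by
    intro t
    unfold Pt
    rw [← Finset.sum_div]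
    exact div_self (hIGc2 t).ne'
  -- marginals of the product
  have hmYZprod : ∀ (y : Y1 × Y2) (z : Z1 × Z2),
      margYZ (prodDist p1 p2) (y, z) = margYZ p1 (y.1, z.1) * margYZ p2 (y.2, z.2) := by
    intro y z
    simpa [margYZ, prodDist] using
      sum_prod_fst_snd (fun a => p1 (a, y.1, z.1)) (fun b => p2 (b, y.2, z.2))
  have hmSYprod : ∀ (s : S1 × S2) (y : Y1 × Y2),
      margSY (prodDist p1 p2) (s, y) = margSY p1 (s.1, y.1) * margSY p2 (s.2, y.2) := by
    intro s y
    simpa [margSY, prodDist] using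
      sum_prod_fst_snd (fun a => p1 (s.1, y.1, a)) (fun b => p2 (s.2, y.2, b))
  have hmSZprod : ∀ (s : S1 × S2) (z : Z1 × Z2),
      margSZ (prodDist p1 p2) (s, z) = margSZ p1 (s.1, z.1) * margSZ p2 (s.2, z.2) := by
    intro s z
    simpa [margSZ, prodDist] using
      sum_prod_fst_snd (fun a => p1 (s.1, a, z.1)) (fun b => p2 (s.2, b, z.2))
  have hcondSYprod : ∀ (s : S1 × S2) (y : Y1 × Y2),
      condSY (prodDist p1 p2) s y = condSY p1 s.1 y.1 * condSY p2 s.2 y.2 := by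
    intro s y
    have hden : (∑ s' : S1 × S2, margSY (prodDist p1 p2) (s', y))
        = (∑ s1', margSY p1 (s1', y.1)) * (∑ s2', margSY p2 (s2', y.2)) := by
      rw [Finset.sum_congr rfl fun s' _ => hmSYprod s' y]
      exact sum_prod_fst_snd (fun a => margSY p1 (a, y.1)) (fun b => margSY p2 (b, y.2))
    unfold condSY
    rw [hmSYprod s y, hden, div_mul_div_comm]
  have hcondSZprod : ∀ (s : S1 × S2) (z : Z1 × Z2),
      condSZ (prodDist p1 p2) s z = condSZ p1 s.1 z.1 * condSZ p2 s.2 z.2 := by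
    intro s z
    have hden : (∑ s' : S1 × S2, margSZ (prodDist p1 p2) (s', z))
        = (∑ s1', margSZ p1 (s1', z.1)) * (∑ s2', margSZ p2 (s2', z.2)) := by
      rw [Finset.sum_congr rfl fun s' _ => hmSZprod s' z]
      exact sum_prod_fst_snd (fun a => margSZ p1 (a, z.1)) (fun b => margSZ p2 (b, z.2))
    unfold condSZ
    rw [hmSZprod s z, hden, div_mul_div_comm]
  have hIGnumprod : ∀ (t : ℝ) (x : (S1 × S2) × (Y1 × Y2) × (Z1 × Z2)),
      IGnum (prodDist p1 p2) t x
        = IGnum p1 t (x.1.1, x.2.1.1, x.2.2.1) * IGnum p2 t (x.1.2, x.2.1.2, x.2.2.2) := by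
    intro t x
    unfold IGnum
    rw [hmYZprod x.2.1 x.2.2, hcondSYprod x.1 x.2.1, hcondSZprod x.1 x.2.2,
      Real.mul_rpow (hcSY1 _ _).le (hcSY2 _ _).le,
      Real.mul_rpow (hcSZ1 _ _).le (hcSZ2 _ _).le]
    ring
  have hIGcprod : ∀ t : ℝ, IGc (prodDist p1 p2) t = IGc p1 t * IGc p2 t := by
    intro t
    unfold IGc
    rw [Finset.sum_congr rfl fun x _ => hIGnumprod t x]
    exact sum_prodDist_split (IGnum p1 t) (IGnum p2 t)
  have hPtmul : ∀ t : ℝ, Pt (prodDist p1 p2) t = prodDist (Pt p1 t) (Pt p2 t) := by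
    intro t
    funext x
    show IGnum (prodDist p1 p2) t x / IGc (prodDist p1 p2) t
        = Pt p1 t (x.1.1, x.2.1.1, x.2.2.1) * Pt p2 t (x.1.2, x.2.1.2, x.2.2.2)
    rw [hIGnumprod t x, hIGcprod t]
    unfold Pt
    rw [div_mul_div_comm]
  have hKL : ∀ t : ℝ, KL (prodDist p1 p2) (Pt (prodDist p1 p2) t)
      = KL p1 (Pt p1 t) + KL p2 (Pt p2 t) := by
    intro t
    rw [hPtmul t]
    have htrans : KL (prodDist p1 p2) (prodDist (Pt p1 t) (Pt p2 t))
        = KL (fun x : (S1 × Y1 × Z1) × (S2 × Y2 × Z2) => p1 x.1 * p2 x.2)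
            (fun x => Pt p1 t x.1 * Pt p2 t x.2) :=
      Fintype.sum_equiv eProd _ _ (fun x => rfl)
    rw [htrans]
    exact KL_prodfun p1 (Pt p1 t) p2 (Pt p2 t) hfull1 hfull2 (hPt1 t) (hPt2 t) hp1s hp2s
  refine ⟨hPtmul, hKL, ?_⟩
  have hbdd1 : BddBelow (Set.range fun t => KL p1 (Pt p1 t)) := by
    refine ⟨0, ?_⟩
    rintro _ ⟨t, rfl⟩
    exact KL_nonneg p1 (Pt p1 t) hfull1 (hPt1 t) hp1s (hPt1sum t)
  have hbdd2 : BddBelow (Set.range fun t => KL p2 (Pt p2 t)) := by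
    refine ⟨0, ?_⟩
    rintro _ ⟨t, rfl⟩
    exact KL_nonneg p2 (Pt p2 t) hfull2 (hPt2 t) hp2s (hPt2sum t)
  refine le_ciInf fun t => ?_
  rw [hKL t]
  exact add_le_add (ciInf_le hbdd1 t) (ciInf_le hbdd2 t)
end
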